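/- arXiv:1908.09241 — 8 statements merged into one kernel-verified Lean document; each statement's English description precedes it below -/
import Mathlib

section
/- Let A be a unital complex Banach algebra, let c > 0, let δ ∈ (0, 1/16), and let e ∈ A satisfy ‖e² − e‖ < δ and ‖e‖ ≤ c. Then there exists an idempotent f ∈ A (i.e. f² = f) with ‖f − e‖ ≤ 4√δ(c + 2)/(1 − √δ). -/
private lemma stmt_3_aux (c t : ℝ) (hc : 0 < c) (ht0 : 0 ≤ t) (htlt : t < 1/4) :
    (4 * c + 5) * (4 * t ^ 2 / 3) * (1 - t) ≤ 4 * t * (c + 2) := by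
  nlinarith [mul_nonneg ht0 hc.le, sq_nonneg t, mul_nonneg (mul_nonneg ht0 ht0) ht0,
    mul_nonneg (mul_nonneg ht0 ht0) hc.le, mul_nonneg (mul_nonneg (mul_nonneg ht0 ht0) ht0) hc.le]


/-- Almost idempotents are close to idempotents: if `A` is a unital complex Banach algebra,
`c > 0`, `δ ∈ (0, 1/16)`, and `e ∈ A` satisfies `‖e² − e‖ < δ` and `‖e‖ ≤ c`, then there is
an idempotent `f ∈ A` with `‖f − e‖ ≤ 4√δ(c + 2)/(1 − √δ)`. -/
theorem stmt_3 (A : Type*) [NormedRing A] [NormedAlgebra ℂ A] [CompleteSpace A]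
    (c : ℝ) (hc : 0 < c) (δ : ℝ) (hδ₀ : 0 < δ) (hδ₁ : δ < 1 / 16)
    (e : A) (he : ‖e ^ 2 - e‖ < δ) (hec : ‖e‖ ≤ c) :
    ∃ f : A, f ^ 2 = f ∧
      ‖f - e‖ ≤ 4 * Real.sqrt δ * (c + 2) / (1 - Real.sqrt δ) := by
  -- We use the Newton-type iteration `F x = 3x² - 2x³` (written without numerals of `A`).
  set F : A → A := fun x => x + (x ^ 2 - x) - (x * (x ^ 2 - x) + x * (x ^ 2 - x)) with hF
  set s : ℕ → A := fun n => F^[n] e with hs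
  have hs0 : s 0 = e := rfl
  have hsucc : ∀ n, s (n + 1) = F (s n) := fun n => Function.iterate_succ_apply' F n e
  have hFdef : ∀ x : A, F x = x + (x ^ 2 - x) - (x * (x ^ 2 - x) + x * (x ^ 2 - x)) :=
    fun x => rfl
  -- key algebraic identity: `(F x)² - F x = 4r³ - 3r²` with `r = x² - x`
  have idA : ∀ x : A, (F x) ^ 2 - F x
      = ((x^2-x)^3 + (x^2-x)^3 + (x^2-x)^3 + (x^2-x)^3)
        - ((x^2-x)^2 + (x^2-x)^2 + (x^2-x)^2) := by
    intro x; simp only [hF]; noncomm_ring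
  -- the idempotency error decreases geometrically
  have hε : ∀ n, ‖s n ^ 2 - s n‖ ≤ δ / 4 ^ n := by
    intro n
    induction n with
    | zero => simpa [hs0] using he.le
    | succ n ih =>
      have hδn : δ / 4 ^ n ≤ δ := by
        apply div_le_self hδ₀.le
        exact one_le_pow₀ (by norm_num)
      set r : A := s n ^ 2 - s n with hr
      have hrδ : ‖r‖ ≤ δ := le_trans ih hδn
      have hr3 : ‖r ^ 3‖ ≤ ‖r‖ * ‖r‖ * ‖r‖ := by
        calc ‖r ^ 3‖ = ‖r * r * r‖ := by rw [pow_succ, pow_two]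
          _ ≤ ‖r * r‖ * ‖r‖ := norm_mul_le _ _
          _ ≤ ‖r‖ * ‖r‖ * ‖r‖ := by
              nlinarith [norm_mul_le r r, norm_nonneg r]
      have hr2 : ‖r ^ 2‖ ≤ ‖r‖ * ‖r‖ := by
        calc ‖r ^ 2‖ = ‖r * r‖ := by rw [pow_two]
          _ ≤ ‖r‖ * ‖r‖ := norm_mul_le _ _
      have key : ‖s (n+1) ^ 2 - s (n+1)‖ ≤ 4 * ‖r ^ 3‖ + 3 * ‖r ^ 2‖ := by
        rw [hsucc, idA (s n), ← hr]
        have h4 : ‖r^3 + r^3 + r^3 + r^3‖ ≤ ‖r^3‖ + ‖r^3‖ + ‖r^3‖ + ‖r^3‖ := by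
          calc ‖r^3 + r^3 + r^3 + r^3‖ ≤ ‖r^3 + r^3 + r^3‖ + ‖r^3‖ := norm_add_le _ _
            _ ≤ (‖r^3 + r^3‖ + ‖r^3‖) + ‖r^3‖ := by gcongr; exact norm_add_le _ _
            _ ≤ ((‖r^3‖ + ‖r^3‖) + ‖r^3‖) + ‖r^3‖ := by gcongr; exact norm_add_le _ _
        have h3 : ‖r^2 + r^2 + r^2‖ ≤ ‖r^2‖ + ‖r^2‖ + ‖r^2‖ := by
          calc ‖r^2 + r^2 + r^2‖ ≤ ‖r^2 + r^2‖ + ‖r^2‖ := norm_add_le _ _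
            _ ≤ (‖r^2‖ + ‖r^2‖) + ‖r^2‖ := by gcongr; exact norm_add_le _ _
        calc ‖(r^3 + r^3 + r^3 + r^3) - (r^2 + r^2 + r^2)‖
            ≤ ‖r^3 + r^3 + r^3 + r^3‖ + ‖r^2 + r^2 + r^2‖ := norm_sub_le _ _
          _ ≤ (‖r^3‖ + ‖r^3‖ + ‖r^3‖ + ‖r^3‖) + (‖r^2‖ + ‖r^2‖ + ‖r^2‖) := by gcongr
          _ = 4 * ‖r^3‖ + 3 * ‖r^2‖ := by ring
      have h0 : (0:ℝ) ≤ ‖r‖ := norm_nonneg r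
      have hx : (0:ℝ) ≤ δ / 4 ^ n := by positivity
      calc ‖s (n+1) ^ 2 - s (n+1)‖ ≤ 4 * ‖r ^ 3‖ + 3 * ‖r ^ 2‖ := key
        _ ≤ 4 * (‖r‖ * ‖r‖ * ‖r‖) + 3 * (‖r‖ * ‖r‖) := by nlinarith
        _ = (4 * ‖r‖ + 3) * (‖r‖ * ‖r‖) := by ring
        _ ≤ 4 * (δ * (δ / 4 ^ n)) := by nlinarith
        _ = (4 * δ) * (δ / 4 ^ n) := by ring
        _ ≤ (1/4) * (δ / 4 ^ n) := by nlinarith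
        _ = δ / 4 ^ (n+1) := by rw [pow_succ]; ring
  -- drift control
  set K : ℝ := (4 * c + 5) * (4 * δ / 3) with hK
  have hKle : K ≤ c + 2 := by rw [hK]; nlinarith
  have hK0 : 0 ≤ K := by positivity
  have hstep : ∀ n, ‖s n‖ ≤ 2 * c + 2 → ‖s (n+1) - s n‖ ≤ (4*c+5) * (δ / 4 ^ n) := by
    intro n hn
    have hrn := hε n
    have h0 : (0:ℝ) ≤ ‖s n ^ 2 - s n‖ := norm_nonneg _
    have hdd : (0:ℝ) ≤ δ / 4 ^ n := by positivity
    have hid : s (n+1) - s n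
        = (s n ^ 2 - s n) - (s n * (s n ^ 2 - s n) + s n * (s n ^ 2 - s n)) := by
      rw [hsucc, hFdef]; abel
    have hmul : ‖s n * (s n ^ 2 - s n)‖ ≤ ‖s n‖ * ‖s n ^ 2 - s n‖ := norm_mul_le _ _
    calc ‖s (n+1) - s n‖
        ≤ ‖s n ^ 2 - s n‖ + ‖s n * (s n ^ 2 - s n) + s n * (s n ^ 2 - s n)‖ := by
          rw [hid]; exact norm_sub_le _ _
      _ ≤ ‖s n ^ 2 - s n‖ + (‖s n * (s n ^ 2 - s n)‖ + ‖s n * (s n ^ 2 - s n)‖) := by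
          gcongr; exact norm_add_le _ _
      _ ≤ (2 * ‖s n‖ + 1) * ‖s n ^ 2 - s n‖ := by nlinarith
      _ ≤ (4*c+5) * (δ / 4 ^ n) := by nlinarith
  have hdist : ∀ n, ‖s n - e‖ ≤ K * (1 - (1/4:ℝ) ^ n) := by
    intro n
    induction n with
    | zero => simp [hs0]
    | succ n ih =>
      have hq0 : (0:ℝ) ≤ (1/4:ℝ) ^ n := by positivity
      have hq1 : (1/4:ℝ) ^ n ≤ 1 := pow_le_one₀ (by norm_num) (by norm_num)
      have hsn : ‖s n‖ ≤ 2 * c + 2 := by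
        have h1 : ‖s n‖ ≤ ‖s n - e‖ + ‖e‖ := by
          calc ‖s n‖ = ‖(s n - e) + e‖ := by congr 1; abel
            _ ≤ ‖s n - e‖ + ‖e‖ := norm_add_le _ _
        nlinarith
      have h2 := hstep n hsn
      have hdiv : δ / 4 ^ n = δ * (1/4:ℝ) ^ n := by
        rw [one_div, inv_pow]; ring
      calc ‖s (n+1) - e‖ ≤ ‖s (n+1) - s n‖ + ‖s n - e‖ := by
            calc ‖s (n+1) - e‖ = ‖(s (n+1) - s n) + (s n - e)‖ := by congr 1; abel
              _ ≤ _ := norm_add_le _ _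
        _ ≤ (4*c+5) * (δ / 4 ^ n) + K * (1 - (1/4:ℝ) ^ n) := by gcongr
        _ = K * (1 - (1/4:ℝ) ^ (n+1)) := by
            rw [hdiv, hK, pow_succ]; ring
  -- the sequence is Cauchy; pass to the limit
  have hcauchy : CauchySeq s := by
    apply cauchySeq_of_le_geometric (1/4 : ℝ) ((4*c+5) * δ) (by norm_num)
    intro n
    have hq0 : (0:ℝ) ≤ (1/4:ℝ) ^ n := by positivity
    have hq1 : (1/4:ℝ) ^ n ≤ 1 := pow_le_one₀ (by norm_num) (by norm_num)
    have hsn : ‖s n‖ ≤ 2 * c + 2 := by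
      have h1 : ‖s n‖ ≤ ‖s n - e‖ + ‖e‖ := by
        calc ‖s n‖ = ‖(s n - e) + e‖ := by congr 1; abel
          _ ≤ ‖s n - e‖ + ‖e‖ := norm_add_le _ _
      have := hdist n
      nlinarith
    have h2 := hstep n hsn
    have hdiv : δ / 4 ^ n = δ * (1/4:ℝ) ^ n := by
      rw [one_div, inv_pow]; ring
    rw [dist_eq_norm, norm_sub_rev]
    calc ‖s (n+1) - s n‖ ≤ (4*c+5) * (δ / 4 ^ n) := h2
      _ = (4*c+5) * δ * (1/4:ℝ) ^ n := by rw [hdiv]; ring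
  obtain ⟨f, hf⟩ := cauchySeq_tendsto_of_complete hcauchy
  refine ⟨f, ?_, ?_⟩
  · -- f is idempotent
    have h1 : Filter.Tendsto (fun n => s n ^ 2 - s n) Filter.atTop (nhds (f ^ 2 - f)) := by
      have := (hf.mul hf).sub hf
      simpa [pow_two] using this
    have h2 : Filter.Tendsto (fun n => s n ^ 2 - s n) Filter.atTop (nhds 0) := by
      apply squeeze_zero_norm hε
      have : Filter.Tendsto (fun n : ℕ => δ * (1/4:ℝ) ^ n) Filter.atTop (nhds 0) := by
        simpa using (tendsto_pow_atTop_nhds_zero_of_lt_one (by norm_num : (0:ℝ) ≤ 1/4)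
          (by norm_num)).const_mul δ
      convert this using 2 with n
      rw [one_div, inv_pow]; ring
    have := tendsto_nhds_unique h1 h2
    rwa [sub_eq_zero] at this
  · -- the norm bound
    have hfe : Filter.Tendsto (fun n => ‖s n - e‖) Filter.atTop (nhds ‖f - e‖) :=
      ((hf.sub tendsto_const_nhds).norm)
    have hle : ‖f - e‖ ≤ K := by
      refine le_of_tendsto hfe (Filter.Eventually.of_forall fun n => ?_)
      have hq0 : (0:ℝ) ≤ (1/4:ℝ) ^ n := by positivity
      have := hdist n
      nlinarith
    refine hle.trans ?_
    set t : ℝ := Real.sqrt δ with hts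
    have ht2 : t ^ 2 = δ := Real.sq_sqrt hδ₀.le
    have ht0 : 0 ≤ t := Real.sqrt_nonneg δ
    have htlt : t < 1/4 := by
      rw [hts]
      exact (Real.sqrt_lt' (by norm_num)).2 (by norm_num; linarith)
    rw [le_div_iff₀ (by linarith : (0:ℝ) < 1 - t), hK, ← ht2]
    exact stmt_3_aux c t hc ht0 htlt
end

section
/- For all c > 0 and all ε ∈ (0, 1/(4c+6)) there exists δ > 0 with the following property: for every unital complex Banach algebra A, every closed subalgebra B ⊆ A, and every idempotent e ∈ A with ‖e‖ ≤ c such that there exists b ∈ B with ‖e − b‖ < δ, there exists an idempotent f ∈ B with ‖e − f‖ < ε. -/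
private lemma norm_four_add {A : Type} [NormedRing A] (a : A) : ‖a+a+a+a‖ ≤ 4*‖a‖ := by
  have h1 := norm_add_le (a+a+a) a
  have h2 := norm_add_le (a+a) a
  have h3 := norm_add_le a a
  linarith

private lemma norm_three_add {A : Type} [NormedRing A] (a : A) : ‖a+a+a‖ ≤ 3*‖a‖ := by
  have h2 := norm_add_le (a+a) a
  have h3 := norm_add_le a a
  linarith

private def newtonSeq {A : Type} [Ring A] (b : A) : ℕ → A
  | 0 => b
  | (n+1) => 3*(newtonSeq b n)^2 - 2*(newtonSeq b n)^3

/-- One step of the cubic Newton iteration: distance moved and new defect. -/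
private lemma newton_step {A : Type} [NormedRing A] (p : A) (R : ℝ) (hm : ‖p‖ ≤ R) :
    ‖p - (3*p^2 - 2*p^3)‖ ≤ (2*R+1) * ‖p^2 - p‖ ∧
    ‖(3*p^2 - 2*p^3)^2 - (3*p^2 - 2*p^3)‖ ≤ (4*R^2+4*R+3) * ‖p^2 - p‖^2 := by
  have hmnn : (0:ℝ) ≤ ‖p‖ := norm_nonneg _
  have htnn : (0:ℝ) ≤ ‖p^2 - p‖ := norm_nonneg _
  constructor
  · rw [show p - (3*p^2-2*p^3) = (p^2-p)*p + (p^2-p)*p - (p^2-p) by noncomm_ring]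
    calc ‖(p^2-p)*p + (p^2-p)*p - (p^2-p)‖
        ≤ ‖(p^2-p)*p + (p^2-p)*p‖ + ‖p^2-p‖ := norm_sub_le _ _
    _ ≤ ‖(p^2-p)*p‖ + ‖(p^2-p)*p‖ + ‖p^2-p‖ := by
        linarith [norm_add_le ((p^2-p)*p) ((p^2-p)*p)]
    _ ≤ ‖p^2-p‖*‖p‖ + ‖p^2-p‖*‖p‖ + ‖p^2-p‖ := by
        linarith [norm_mul_le (p^2-p) p]
    _ ≤ (2*R+1) * ‖p^2-p‖ := by nlinarith [mul_le_mul_of_nonneg_left hm htnn]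
  · rw [show (3*p^2-2*p^3)^2 - (3*p^2-2*p^3) =
      ((p^2-p)*(p^2-p))*(p*p+p*p+p*p+p*p - (p+p+p+p))
        - ((p^2-p)*(p^2-p) + (p^2-p)*(p^2-p) + (p^2-p)*(p^2-p)) by noncomm_ring]
    have hw : ‖(p*p+p*p+p*p+p*p - (p+p+p+p))‖ ≤ 4*‖p‖^2 + 4*‖p‖ := by
      calc ‖(p*p+p*p+p*p+p*p - (p+p+p+p))‖
          ≤ ‖p*p+p*p+p*p+p*p‖ + ‖p+p+p+p‖ := norm_sub_le _ _
      _ ≤ 4*‖p*p‖ + 4*‖p‖ := by linarith [norm_four_add (p*p), norm_four_add p]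
      _ ≤ 4*‖p‖^2 + 4*‖p‖ := by nlinarith [norm_mul_le p p]
    have huu : ‖(p^2-p)*(p^2-p)‖ ≤ ‖p^2-p‖^2 := by
      nlinarith [norm_mul_le (p^2-p) (p^2-p)]
    have huunn : (0:ℝ) ≤ ‖(p^2-p)*(p^2-p)‖ := norm_nonneg _
    have h5 : (0:ℝ) ≤ 4*‖p‖^2 + 4*‖p‖ := by positivity
    calc ‖((p^2-p)*(p^2-p))*(p*p+p*p+p*p+p*p - (p+p+p+p))
          - ((p^2-p)*(p^2-p) + (p^2-p)*(p^2-p) + (p^2-p)*(p^2-p))‖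
        ≤ ‖((p^2-p)*(p^2-p))*(p*p+p*p+p*p+p*p - (p+p+p+p))‖
          + ‖(p^2-p)*(p^2-p) + (p^2-p)*(p^2-p) + (p^2-p)*(p^2-p)‖ := norm_sub_le _ _
    _ ≤ ‖(p^2-p)*(p^2-p)‖ * (4*‖p‖^2 + 4*‖p‖) + 3*‖(p^2-p)*(p^2-p)‖ := by
        have h1 := norm_mul_le ((p^2-p)*(p^2-p)) (p*p+p*p+p*p+p*p - (p+p+p+p))
        have h2 := norm_three_add ((p^2-p)*(p^2-p))
        have h4 := mul_le_mul_of_nonneg_left hw huunn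
        linarith
    _ ≤ ‖p^2-p‖^2 * (4*‖p‖^2 + 4*‖p‖) + 3*‖p^2-p‖^2 := by
        have h6 := mul_le_mul_of_nonneg_right huu h5
        nlinarith
    _ ≤ (4*R^2+4*R+3) * ‖p^2-p‖^2 := by
        have h6 : 4*‖p‖^2 + 4*‖p‖ ≤ 4*R^2 + 4*R := by nlinarith
        nlinarith [mul_le_mul_of_nonneg_right h6 (sq_nonneg ‖p^2-p‖)]

set_option maxHeartbeats 1000000 in
/-- Convergence of the cubic Newton iteration to an idempotent in a closed subalgebra. -/
private lemma newton_conv {A : Type} [NormedRing A] [NormedAlgebra ℂ A] [CompleteSpace A]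
    (B : NonUnitalSubalgebra ℂ A) (hBc : IsClosed (B : Set A)) (b : A) (hbB : b ∈ B)
    (R : ℝ) (hbR : ‖b‖ + 1 ≤ R)
    (hKd0 : (4*R^2+4*R+3) * ‖b^2 - b‖ ≤ 1/2)
    (hLd0 : 2*(2*R+1)*‖b^2 - b‖ ≤ 1) :
    ∃ f ∈ B, f^2 = f ∧ ‖f - b‖ ≤ 2*(2*R+1)*‖b^2 - b‖ := by
  obtain ⟨d₀, hd₀⟩ : ∃ d : ℝ, d = ‖b^2 - b‖ := ⟨_, rfl⟩
  obtain ⟨L, hLdef⟩ : ∃ l : ℝ, l = 2*R+1 := ⟨_, rfl⟩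
  obtain ⟨K, hKdef⟩ : ∃ k : ℝ, k = 4*R^2+4*R+3 := ⟨_, rfl⟩
  rw [← hd₀, ← hKdef] at hKd0
  rw [← hd₀, ← hLdef] at hLd0
  have hd₀nn : 0 ≤ d₀ := hd₀ ▸ norm_nonneg _
  have hRpos : 0 < R := by have := norm_nonneg b; linarith
  have hLpos : 0 < L := by rw [hLdef]; linarith
  have hKpos : 0 < K := by rw [hKdef]; nlinarith
  set x : ℕ → A := newtonSeq b with hx
  have hx0 : x 0 = b := rfl
  have hxs : ∀ n, x (n+1) = 3*(x n)^2 - 2*(x n)^3 := fun n => rfl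
  have H : ∀ n : ℕ, x n ∈ B ∧ ‖x n - b‖ ≤ 2*L*d₀*(1 - (1/2:ℝ)^n)
      ∧ ‖(x n)^2 - x n‖ ≤ d₀ * (1/2:ℝ)^n := by
    intro n
    induction n with
    | zero => exact ⟨hbB, by simp [hx0], by simp [hx0, hd₀]⟩
    | succ n ih =>
      obtain ⟨hmem, hnb, ht⟩ := ih
      set p : A := x n with hp
      have htnn : (0:ℝ) ≤ ‖p^2 - p‖ := norm_nonneg _
      have hqnn : (0:ℝ) ≤ (1/2:ℝ)^n := by positivity
      have hq1 : (1/2:ℝ)^n ≤ 1 := pow_le_one₀ (by norm_num) (by norm_num)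
      have h0 : (0:ℝ) ≤ 2*L*d₀*(1/2:ℝ)^n :=
        mul_nonneg (mul_nonneg (by linarith) hd₀nn) hqnn
      have hnb' : ‖p - b‖ ≤ 2*L*d₀ := by nlinarith [hnb, h0]
      have hm : ‖p‖ ≤ R := by
        calc ‖p‖ = ‖(p - b) + b‖ := by rw [sub_add_cancel]
        _ ≤ ‖p - b‖ + ‖b‖ := norm_add_le _ _
        _ ≤ R := by linarith
      obtain ⟨hstep, hdef⟩ := newton_step p R hm
      rw [← hLdef] at hstep
      rw [← hKdef] at hdef
      have hmem' : x (n+1) ∈ B := by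
        rw [hxs n, show (3*p^2-2*p^3 : A) = (p*p+p*p+p*p) - (p*(p*p) + p*(p*p)) by noncomm_ring]
        exact sub_mem (add_mem (add_mem (mul_mem hmem hmem) (mul_mem hmem hmem))
          (mul_mem hmem hmem))
          (add_mem (mul_mem hmem (mul_mem hmem hmem)) (mul_mem hmem (mul_mem hmem hmem)))
      have htd : ‖p^2 - p‖ ≤ d₀ := by nlinarith [ht]
      refine ⟨hmem', ?_, ?_⟩
      · calc ‖x (n+1) - b‖ ≤ ‖x (n+1) - p‖ + ‖p - b‖ := norm_sub_le_norm_sub_add_norm_sub _ _ _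
        _ = ‖p - x (n+1)‖ + ‖p - b‖ := by rw [norm_sub_rev]
        _ ≤ L * (d₀ * (1/2:ℝ)^n) + 2*L*d₀*(1 - (1/2:ℝ)^n) := by
            have h1 : ‖p - x (n+1)‖ ≤ L * ‖p^2 - p‖ := by rw [hxs n]; exact hstep
            have h2 := mul_le_mul_of_nonneg_left ht hLpos.le
            linarith
        _ = 2*L*d₀*(1 - (1/2:ℝ)^(n+1)) := by ring
      · have h1 : ‖(x (n+1))^2 - x (n+1)‖ ≤ K * ‖p^2 - p‖^2 := by rw [hxs n]; exact hdef
        have h2 : ‖p^2-p‖*‖p^2-p‖ ≤ d₀*‖p^2-p‖ := mul_le_mul_of_nonneg_right htd htnn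
        have h3 := mul_le_mul_of_nonneg_left h2 hKpos.le
        have h4 := mul_le_mul_of_nonneg_right hKd0 htnn
        calc ‖(x (n+1))^2 - x (n+1)‖ ≤ K * ‖p^2-p‖^2 := h1
        _ ≤ (K * d₀) * ‖p^2-p‖ := by nlinarith [h3]
        _ ≤ (1/2) * (d₀ * (1/2:ℝ)^n) := by nlinarith [h4, ht]
        _ = d₀ * (1/2:ℝ)^(n+1) := by ring
  have hcau : CauchySeq x := by
    apply cauchySeq_of_le_geometric (1/2:ℝ) (L*d₀) (by norm_num)
    intro n
    rw [dist_eq_norm]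
    obtain ⟨hmem, hnb, ht⟩ := H n
    set p : A := x n with hp
    have htnn : (0:ℝ) ≤ ‖p^2 - p‖ := norm_nonneg _
    have hqnn : (0:ℝ) ≤ (1/2:ℝ)^n := by positivity
    have hq1 : (1/2:ℝ)^n ≤ 1 := pow_le_one₀ (by norm_num) (by norm_num)
    have h0 : (0:ℝ) ≤ 2*L*d₀*(1/2:ℝ)^n :=
      mul_nonneg (mul_nonneg (by linarith) hd₀nn) hqnn
    have hnb' : ‖p - b‖ ≤ 2*L*d₀ := by nlinarith [hnb, h0]
    have hm : ‖p‖ ≤ R := by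
      calc ‖p‖ = ‖(p - b) + b‖ := by rw [sub_add_cancel]
      _ ≤ ‖p - b‖ + ‖b‖ := norm_add_le _ _
      _ ≤ R := by linarith
    obtain ⟨hstep, _⟩ := newton_step p R hm
    rw [← hLdef] at hstep
    calc ‖p - x (n+1)‖ ≤ L * ‖p^2 - p‖ := by rw [hxs n]; exact hstep
    _ ≤ L * (d₀ * (1/2:ℝ)^n) := mul_le_mul_of_nonneg_left ht hLpos.le
    _ = L*d₀ * (1/2:ℝ)^n := by ring
  obtain ⟨f, hf⟩ := cauchySeq_tendsto_of_complete hcau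
  have hfB : f ∈ B := hBc.mem_of_tendsto hf (Filter.Eventually.of_forall fun n => (H n).1)
  have hq0 : Filter.Tendsto (fun n : ℕ => d₀ * (1/2:ℝ)^n) Filter.atTop (nhds 0) := by
    have := (tendsto_pow_atTop_nhds_zero_of_lt_one (by norm_num : (0:ℝ) ≤ 1/2)
      (by norm_num : (1/2:ℝ) < 1)).const_mul d₀
    simpa using this
  have hf2 : f^2 = f := by
    have h1 : Filter.Tendsto (fun n => (x n)^2 - x n) Filter.atTop (nhds (f^2 - f)) :=
      (hf.pow 2).sub hf
    have h0 : Filter.Tendsto (fun n => (x n)^2 - x n) Filter.atTop (nhds 0) :=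
      squeeze_zero_norm (fun n => (H n).2.2) hq0
    exact sub_eq_zero.mp (tendsto_nhds_unique h1 h0)
  refine ⟨f, hfB, hf2, ?_⟩
  rw [← hd₀, ← hLdef]
  have hnormt : Filter.Tendsto (fun n => ‖x n - b‖) Filter.atTop (nhds ‖f - b‖) :=
    ((hf.sub tendsto_const_nhds).norm)
  refine le_of_tendsto hnormt (Filter.Eventually.of_forall fun n => ?_)
  have hqnn : (0:ℝ) ≤ (1/2:ℝ)^n := by positivity
  have h0 : (0:ℝ) ≤ 2*L*d₀*(1/2:ℝ)^n :=
    mul_nonneg (mul_nonneg (by linarith) hd₀nn) hqnn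
  nlinarith [(H n).2.1, h0]

set_option maxHeartbeats 1000000 in
/-- For all `c > 0` and `ε ∈ (0, 1/(4c+6))` there exists `δ > 0` such that for every unital
complex Banach algebra `A`, every closed (not necessarily unital) subalgebra `B ⊆ A`, and
every idempotent `e ∈ A` with `‖e‖ ≤ c` lying within `δ` of `B`, there is an idempotent
`f ∈ B` with `‖e − f‖ < ε`. -/
theorem stmt_4 (c ε : ℝ) (hc : 0 < c) (hε₀ : 0 < ε) (hε₁ : ε < 1 / (4 * c + 6)) :
    ∃ δ > (0 : ℝ),
      ∀ (A : Type) [NormedRing A] [NormedAlgebra ℂ A] [CompleteSpace A],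
        ∀ B : NonUnitalSubalgebra ℂ A, IsClosed (B : Set A) →
          ∀ e : A, e ^ 2 = e → ‖e‖ ≤ c → (∃ b ∈ B, ‖e - b‖ < δ) →
            ∃ f ∈ B, f ^ 2 = f ∧ ‖e - f‖ < ε := by
  obtain ⟨R, hR⟩ : ∃ r : ℝ, r = c + 2 := ⟨_, rfl⟩
  obtain ⟨L, hL⟩ : ∃ l : ℝ, l = 2*R + 1 := ⟨_, rfl⟩
  obtain ⟨K, hK⟩ : ∃ k : ℝ, k = 4*R^2 + 4*R + 3 := ⟨_, rfl⟩
  have hRpos : 0 < R := by rw [hR]; linarith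
  have hLpos : 0 < L := by rw [hL]; linarith
  have hKpos : 0 < K := by rw [hK]; nlinarith
  have hcc : (0:ℝ) < 2*c + 2 := by linarith
  have hε1 : ε < 1 := by
    have h6 : (1:ℝ)/(4*c+6) ≤ 1 := by
      rw [div_le_one (by linarith)]; linarith
    linarith
  refine ⟨min 1 (min (ε/2) (min (1/(2*K*(2*c+2))) (ε/(8*L*(2*c+2))))), ?_, ?_⟩
  · simp only [gt_iff_lt, lt_min_iff]
    refine ⟨by norm_num, by positivity, by positivity, by positivity⟩
  intro A _ _ _ B hBc e he hec ⟨b, hbB, hbe⟩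
  obtain ⟨δ, hδ⟩ : ∃ d : ℝ,
      d = min 1 (min (ε/2) (min (1/(2*K*(2*c+2))) (ε/(8*L*(2*c+2))))) := ⟨_, rfl⟩
  rw [← hδ] at hbe
  have hδ1 : δ ≤ 1 := hδ ▸ min_le_left _ _
  have hδ2 : δ ≤ ε/2 := hδ ▸ le_trans (min_le_right _ _) (min_le_left _ _)
  have hδ3 : δ ≤ 1/(2*K*(2*c+2)) :=
    hδ ▸ le_trans (min_le_right _ _) (le_trans (min_le_right _ _) (min_le_left _ _))
  have hδ4 : δ ≤ ε/(8*L*(2*c+2)) :=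
    hδ ▸ le_trans (min_le_right _ _) (le_trans (min_le_right _ _) (min_le_right _ _))
  have hδpos : 0 < δ := lt_of_le_of_lt (norm_nonneg _) hbe
  have hbnorm : ‖b‖ ≤ c + 1 := by
    calc ‖b‖ = ‖e - b + -e‖ := by rw [show e - b + -e = -b by abel, norm_neg]
    _ ≤ ‖e - b‖ + ‖e‖ := by simpa using norm_add_le (e-b) (-e)
    _ ≤ c + 1 := by linarith
  obtain ⟨d₀, hd₀⟩ : ∃ d : ℝ, d = ‖b^2 - b‖ := ⟨_, rfl⟩
  have hd₀nn : 0 ≤ d₀ := hd₀ ▸ norm_nonneg _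
  have hd₀le : d₀ ≤ δ * (2*c + 2) := by
    have hid : b^2 - b = b*(b-e) + (b-e)*e + (e - b) := by
      have h : b^2 - b = b*(b-e) + (b-e)*e + (e^2 - b) := by noncomm_ring
      rw [h, he]
    have hbe' : ‖b - e‖ < δ := by rwa [norm_sub_rev]
    calc d₀ = ‖b*(b-e) + (b-e)*e + (e - b)‖ := by rw [hd₀, hid]
    _ ≤ ‖b*(b-e) + (b-e)*e‖ + ‖e - b‖ := norm_add_le _ _
    _ ≤ ‖b*(b-e)‖ + ‖(b-e)*e‖ + ‖e - b‖ := by linarith [norm_add_le (b*(b-e)) ((b-e)*e)]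
    _ ≤ ‖b‖*‖b-e‖ + ‖b-e‖*‖e‖ + ‖e - b‖ := by
        linarith [norm_mul_le b (b-e), norm_mul_le (b-e) e]
    _ ≤ (c+1)*δ + δ*c + δ := by
        have h1 : ‖b‖*‖b-e‖ ≤ (c+1)*δ :=
          mul_le_mul hbnorm hbe'.le (norm_nonneg _) (by linarith)
        have h2 : ‖b-e‖*‖e‖ ≤ δ*c :=
          mul_le_mul hbe'.le hec (norm_nonneg _) hδpos.le
        linarith [hbe.le]
    _ = δ * (2*c + 2) := by ring
  have hKd : K * d₀ ≤ 1/2 := by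
    have h1 : δ * (2*K*(2*c+2)) ≤ 1 := by
      rw [le_div_iff₀ (by positivity)] at hδ3
      linarith
    nlinarith [mul_le_mul_of_nonneg_left hd₀le hKpos.le]
  have hLd : 2 * L * d₀ ≤ ε/4 := by
    have h1 : δ * (8*L*(2*c+2)) ≤ ε := by
      rw [le_div_iff₀ (by positivity)] at hδ4
      linarith
    nlinarith [mul_le_mul_of_nonneg_left hd₀le (by linarith : (0:ℝ) ≤ 2*L)]
  have hLd1 : 2 * L * d₀ ≤ 1 := by linarith
  obtain ⟨f, hfB, hf2, hfb⟩ := newton_conv B hBc b hbB R (by rw [hR]; linarith)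
    (by rw [← hK, ← hd₀]; linarith) (by rw [← hL, ← hd₀]; exact hLd1)
  refine ⟨f, hfB, hf2, ?_⟩
  have hfb' : ‖f - b‖ ≤ 2*L*d₀ := by rwa [← hL, ← hd₀] at hfb
  calc ‖e - f‖ = ‖(e - b) + -(f - b)‖ := by rw [show (e-b) + -(f-b) = e - f by abel]
  _ ≤ ‖e - b‖ + ‖f - b‖ := by
      rw [norm_sub_rev f b]; simpa using norm_add_le (e-b) (-(f-b))
  _ < δ + ε/4 := by linarith
  _ ≤ ε/2 + ε/4 := by linarith
  _ < ε := by linarith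
end

section
/- Let c > 0 and ε ∈ (0, 1/(4c+6)). Let A be a unital complex Banach algebra, let B ⊆ A be a closed subalgebra, let e ∈ A be an idempotent with ‖e‖ ≤ c, and let f, f' ∈ B be idempotents with ‖e − f‖ < ε and ‖e − f'‖ < ε. Then f and f' are similar via an element of the unitization of B: there exists b ∈ B such that s := 1 + b is invertible in A and s·f = f'·s. -/
/-- Uniqueness half of Lemma 2.3(i): if `e` is an idempotent of norm at most `c` in a unital
complex Banach algebra `A`, `B ⊆ A` is a closed subalgebra, `ε < 1/(4c+6)`, and `f, f' ∈ B`
are idempotents with `‖e − f‖ < ε` and `‖e − f'‖ < ε`, then `f` and `f'` are similar via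
an element `s = 1 + b` with `b ∈ B`, i.e. `s` is invertible in `A` and `s·f = f'·s`. -/
theorem stmt_5 (c ε : ℝ) (hc : 0 < c) (hε₀ : 0 < ε) (hε₁ : ε < 1 / (4 * c + 6))
    (A : Type*) [NormedRing A] [NormedAlgebra ℂ A] [CompleteSpace A]
    (B : NonUnitalSubalgebra ℂ A) (hB : IsClosed (B : Set A))
    (e : A) (he : e ^ 2 = e) (hec : ‖e‖ ≤ c)
    (f f' : A) (hfB : f ∈ B) (hf'B : f' ∈ B)
    (hf : f ^ 2 = f) (hf' : f' ^ 2 = f')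
    (hef : ‖e - f‖ < ε) (hef' : ‖e - f'‖ < ε) :
    ∃ b ∈ B, IsUnit (1 + b) ∧ (1 + b) * f = f' * (1 + b) := by
  have hff : f * f = f := by rw [← sq, hf]
  have hf'f' : f' * f' = f' := by rw [← sq, hf']
  set b : A := f' * f + f' * f - f - f' with hbdef
  have hbB : b ∈ B := by
    exact sub_mem (sub_mem (add_mem (mul_mem hf'B hfB) (mul_mem hf'B hfB)) hfB) hf'B
  -- norm bound
  have hεc : ε * (4 * c + 6) < 1 := by
    rw [lt_div_iff₀ (by linarith)] at hε₁; linarith [hε₁]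
  have hfe : ‖f - f'‖ ≤ ‖e - f‖ + ‖e - f'‖ := by
    calc ‖f - f'‖ = ‖(e - f') - (e - f)‖ := by congr 1; abel
      _ ≤ ‖e - f'‖ + ‖e - f‖ := norm_sub_le _ _
      _ = ‖e - f‖ + ‖e - f'‖ := by ring
  have hff' : ‖f - f'‖ < 2 * ε := by linarith
  have hnf' : ‖f'‖ ≤ c + ε := by
    calc ‖f'‖ = ‖e - (e - f')‖ := by congr 1; abel
      _ ≤ ‖e‖ + ‖e - f'‖ := norm_sub_le _ _
      _ ≤ c + ε := by linarith
  have hbid : b = f' * (f - f') + f' * (f - f') - (f - f') := by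
    rw [hbdef, mul_sub, hf'f']; abel
  have hbnorm : ‖b‖ < 1 := by
    have h1 : ‖f' * (f - f')‖ ≤ ‖f'‖ * ‖f - f'‖ := norm_mul_le _ _
    have h2 : ‖b‖ ≤ ‖f' * (f - f')‖ + ‖f' * (f - f')‖ + ‖f - f'‖ := by
      rw [hbid]
      calc ‖f' * (f - f') + f' * (f - f') - (f - f')‖
          ≤ ‖f' * (f - f') + f' * (f - f')‖ + ‖f - f'‖ := norm_sub_le _ _
        _ ≤ ‖f' * (f - f')‖ + ‖f' * (f - f')‖ + ‖f - f'‖ := by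
            linarith [norm_add_le (f' * (f - f')) (f' * (f - f'))]
    have hnn : (0:ℝ) ≤ ‖f - f'‖ := norm_nonneg _
    have hnn' : (0:ℝ) ≤ ‖f'‖ := norm_nonneg _
    have hε1 : ε < 1 := by nlinarith
    have h3 : ‖f'‖ * ‖f - f'‖ ≤ (c + ε) * (2 * ε) :=
      mul_le_mul hnf' hff'.le hnn (by linarith)
    nlinarith
  have hu : IsUnit (1 + b) := by
    have := (Units.oneSub (-b) (by simpa using hbnorm)).isUnit
    simpa [sub_neg_eq_add] using this
  refine ⟨b, hbB, hu, ?_⟩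
  have lhs : (1 + b) * f = f' * f := by
    rw [hbdef]
    simp only [add_mul, sub_mul, one_mul, mul_assoc, hff]
    abel
  have rhs : f' * (1 + b) = f' * f := by
    rw [hbdef]
    simp only [mul_add, mul_sub, mul_one, ← mul_assoc, hf'f']
    abel
  rw [lhs, rhs]
end

section
/- Let A be a unital C*-algebra, let c, δ > 0, and let y, z ∈ A with ‖y‖ ≤ c and ‖z‖ ≤ c satisfy (1+y)(1+z) = 1 and (1+z)(1+y) = 1, so that u := 1+y is invertible with u⁻¹ = 1+z. Let h ∈ A be a positive contraction (0 ≤ h ≤ 1) such that ‖hy − yh‖ ≤ δ‖y‖ and ‖hz − zh‖ ≤ δ‖z‖. Define a := h + (1−h)u and b := h + u⁻¹(1−h). Then ‖a·b − 1 − (y+z)·h·(1−h)‖ ≤ 2(c²+c)δ and ‖b·a − 1 − (y+z)·h·(1−h)‖ ≤ 2(c²+c)δ. -/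
/-- Lemma 3.6 ('inv cut'): Let `A` be a unital C*-algebra, `c, δ > 0`, and let `y, z ∈ A`
with `‖y‖ ≤ c`, `‖z‖ ≤ c` satisfy `(1+y)(1+z) = (1+z)(1+y) = 1`, so `u := 1+y` is invertible
with `u⁻¹ = 1+z`.  Let `h` be a positive contraction almost commuting with `y` and `z`:
`‖hy − yh‖ ≤ δ‖y‖` and `‖hz − zh‖ ≤ δ‖z‖`.  With `a := h + (1−h)u` and `b := h + u⁻¹(1−h)`,
both `a·b − 1` and `b·a − 1` are within `2(c² + c)δ` of `(y+z)·h·(1−h)`. -/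
theorem stmt_9 (A : Type*) [NormedRing A] [StarRing A] [CStarRing A]
    [NormedAlgebra ℂ A] [CompleteSpace A] [StarModule ℂ A]
    [PartialOrder A] [StarOrderedRing A]
    (c δ : ℝ) (hc : 0 < c) (hδ : 0 < δ)
    (y z : A) (hy : ‖y‖ ≤ c) (hz : ‖z‖ ≤ c)
    (h₁ : (1 + y) * (1 + z) = 1) (h₂ : (1 + z) * (1 + y) = 1)
    (h : A) (hpos : 0 ≤ h) (hcontr : h ≤ 1)
    (hhy : ‖h * y - y * h‖ ≤ δ * ‖y‖) (hhz : ‖h * z - z * h‖ ≤ δ * ‖z‖) :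
    ‖(h + (1 - h) * (1 + y)) * (h + (1 + z) * (1 - h)) - 1 - (y + z) * h * (1 - h)‖ ≤
        2 * (c ^ 2 + c) * δ ∧
    ‖(h + (1 + z) * (1 - h)) * (h + (1 - h) * (1 + y)) - 1 - (y + z) * h * (1 - h)‖ ≤
        2 * (c ^ 2 + c) * δ := by
  letI : CStarAlgebra A := {}
  -- relations y*z = -(y+z), z*y = -(y+z)
  have ryz : y * z + y + z = 0 := by
    have : y * z + y + z = (1 + y) * (1 + z) - 1 := by noncomm_ring
    rw [this, h₁, sub_self]
  have rzy : z * y + y + z = 0 := by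
    have : z * y + y + z = (1 + z) * (1 + y) - 1 := by noncomm_ring
    rw [this, h₂, sub_self]
  -- norm facts
  have hknn : (0:A) ≤ 1 - h := sub_nonneg.mpr hcontr
  have hh1 : ‖h‖ ≤ 1 := (CStarAlgebra.norm_le_one_iff_of_nonneg h hpos).mpr hcontr
  have hk1 : ‖(1:A) - h‖ ≤ 1 :=
    (CStarAlgebra.norm_le_one_iff_of_nonneg _ hknn).mpr (by simpa using hpos)
  have hCy : ‖h * y - y * h‖ ≤ δ * c := hhy.trans (by nlinarith)
  have hCz : ‖h * z - z * h‖ ≤ δ * c := hhz.trans (by nlinarith)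
  constructor
  · -- ab case
    have key : (h + (1 - h) * (1 + y)) * (h + (1 + z) * (1 - h)) - 1 - (y + z) * h * (1 - h)
        = (h * z - z * h) * (1 - h) - (h * y - y * h) * h
          + (1 - h) * (y * z + y + z) * (1 - h) := by noncomm_ring
    rw [ryz, mul_zero, zero_mul, add_zero] at key
    rw [key]
    calc ‖(h * z - z * h) * (1 - h) - (h * y - y * h) * h‖
        ≤ ‖(h * z - z * h) * (1 - h)‖ + ‖(h * y - y * h) * h‖ := norm_sub_le _ _
      _ ≤ ‖h * z - z * h‖ * ‖(1:A) - h‖ + ‖h * y - y * h‖ * ‖h‖ := by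
          gcongr <;> exact norm_mul_le _ _
      _ ≤ (δ * c) * 1 + (δ * c) * 1 := by
          gcongr <;> first
            | exact hCz | exact hCy | exact hk1 | exact hh1
            | positivity
      _ ≤ 2 * (c ^ 2 + c) * δ := by nlinarith
  · -- ba case
    have key : (h + (1 + z) * (1 - h)) * (h + (1 - h) * (1 + y)) - 1 - (y + z) * h * (1 - h)
        = -(h * y - y * h) - z * (1 - h) * (h * y - y * h) - z * (h * y - y * h) * (1 - h)
          + (z * y + y + z) * ((1 - h) * (1 - h)) := by noncomm_ring
    rw [rzy, zero_mul, add_zero] at key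
    rw [key]
    have n1 : ‖z * (1 - h) * (h * y - y * h)‖ ≤ c * (δ * c) := by
      calc ‖z * (1 - h) * (h * y - y * h)‖
          ≤ ‖z * (1 - h)‖ * ‖h * y - y * h‖ := norm_mul_le _ _
        _ ≤ (‖z‖ * ‖(1:A) - h‖) * ‖h * y - y * h‖ := by
            gcongr; exact norm_mul_le _ _
        _ ≤ (c * 1) * (δ * c) := by gcongr <;> positivity
        _ = c * (δ * c) := by ring
    have n2 : ‖z * (h * y - y * h) * (1 - h)‖ ≤ c * (δ * c) := by
      calc ‖z * (h * y - y * h) * (1 - h)‖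
          ≤ ‖z * (h * y - y * h)‖ * ‖(1:A) - h‖ := norm_mul_le _ _
        _ ≤ (‖z‖ * ‖h * y - y * h‖) * ‖(1:A) - h‖ := by
            gcongr; exact norm_mul_le _ _
        _ ≤ (c * (δ * c)) * 1 := by gcongr <;> positivity
        _ = c * (δ * c) := by ring
    calc ‖-(h * y - y * h) - z * (1 - h) * (h * y - y * h) - z * (h * y - y * h) * (1 - h)‖
        ≤ ‖-(h * y - y * h) - z * (1 - h) * (h * y - y * h)‖
            + ‖z * (h * y - y * h) * (1 - h)‖ := norm_sub_le _ _
      _ ≤ ‖-(h * y - y * h)‖ + ‖z * (1 - h) * (h * y - y * h)‖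
            + ‖z * (h * y - y * h) * (1 - h)‖ := by
          gcongr; exact norm_sub_le _ _
      _ ≤ δ * c + c * (δ * c) + c * (δ * c) := by
          gcongr <;> first
            | (rw [norm_neg]; exact hCy) | exact n1 | exact n2
      _ ≤ 2 * (c ^ 2 + c) * δ := by nlinarith
end

section
/- Let A be a C*-algebra, let X₀ be a finite-dimensional subspace of A, and let N ≥ 2. Then there exists a finite-dimensional subspace X of A containing X₀ such that for any δ > 0 there exists δ' > 0 with the following property: if (h, C, D) is a δ'-ideal structure for X, then for all x ∈ X₀: (i) ‖hx − xh‖ ≤ δ‖x‖; and (ii) for all n ∈ {1, …, N}, hⁿx is δ‖x‖-in C, hⁿ(1−h)x is δ‖x‖-in D, and hⁿ(1−h)x is δ‖x‖-in C ∩ D. -/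
set_option linter.unusedSectionVars false
set_option linter.unusedVariables false
set_option maxHeartbeats 8000000

open scoped MultiplierAlgebra

noncomputable section

/-- `a` is `ε`-in the subset `S`: there is `s ∈ S` with `‖a − s‖ ≤ ε`. -/
def EpsIn {E : Type*} [SeminormedAddGroup E] (a : E) (ε : ℝ) (S : Set E) : Prop :=
  ∃ s ∈ S, ‖a - s‖ ≤ ε

variable {A : Type*} [NonUnitalNormedRing A] [StarRing A] [CStarRing A]
  [NormedSpace ℂ A] [IsScalarTower ℂ A A] [SMulCommClass ℂ A A]
  [CompleteSpace A] [StarModule ℂ A]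

/-- A `δ`-ideal structure for a subspace `X` of a C*-algebra `A` (Definition 3.1): a triple
`(h, C, D)` where `h` is a positive contraction in the multiplier algebra `𝓜(ℂ, A)` (an
element `h : 𝓜(ℂ, A)` acts on `x : A` on the left by `h.fst x` and on the right by
`h.snd x`) and `C`, `D` are C*-subalgebras of `A`, such that for all `x ∈ X`:
`‖hx − xh‖ ≤ δ‖x‖`; `hx` is `δ‖x‖`-in `C` and `(1−h)x` is `δ‖x‖`-in `D`; and both
`h(1−h)x` and `h²(1−h)x` are `δ‖x‖`-in `C ∩ D`. -/
def IsIdealStructure (δ : ℝ) (X : Set A) (h : 𝓜(ℂ, A))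
    (C D : NonUnitalStarSubalgebra ℂ A) : Prop :=
  (∃ b : 𝓜(ℂ, A), h = star b * b) ∧ ‖h‖ ≤ 1 ∧
    ∀ x ∈ X,
      ‖h.fst x - h.snd x‖ ≤ δ * ‖x‖ ∧
      EpsIn (h.fst x) (δ * ‖x‖) (C : Set A) ∧
      EpsIn (x - h.fst x) (δ * ‖x‖) (D : Set A) ∧
      EpsIn ((h * (1 - h)).fst x) (δ * ‖x‖) ((C : Set A) ∩ (D : Set A)) ∧
      EpsIn ((h ^ 2 * (1 - h)).fst x) (δ * ‖x‖) ((C : Set A) ∩ (D : Set A))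

section Helpers

namespace EpsIn
variable {E : Type*} [SeminormedAddCommGroup E] {a b : E} {ε η : ℝ} {S S' : Set E}

lemma mono (h : EpsIn a ε S) (hε : ε ≤ η) : EpsIn a η S :=
  let ⟨s, hs, h'⟩ := h; ⟨s, hs, h'.trans hε⟩

lemma subset (h : EpsIn a ε S) (hS : S ⊆ S') : EpsIn a ε S' :=
  let ⟨s, hs, h'⟩ := h; ⟨s, hS hs, h'⟩

lemma close {r : ℝ} (h : EpsIn b ε S) (hab : ‖a - b‖ ≤ r) : EpsIn a (r + ε) S := by
  obtain ⟨s, hs, h'⟩ := h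
  refine ⟨s, hs, ?_⟩
  calc ‖a - s‖ = ‖(a - b) + (b - s)‖ := by abel_nf
  _ ≤ ‖a - b‖ + ‖b - s‖ := norm_add_le _ _
  _ ≤ r + ε := add_le_add hab h'

lemma add (hS : ∀ p q : E, p ∈ S → q ∈ S → p + q ∈ S)
    (h1 : EpsIn a ε S) (h2 : EpsIn b η S) : EpsIn (a + b) (ε + η) S := by
  obtain ⟨s, hs, h1'⟩ := h1
  obtain ⟨t, ht, h2'⟩ := h2
  refine ⟨s + t, hS s t hs ht, ?_⟩
  calc ‖a + b - (s + t)‖ = ‖(a - s) + (b - t)‖ := by abel_nf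
  _ ≤ ‖a - s‖ + ‖b - t‖ := norm_add_le _ _
  _ ≤ ε + η := add_le_add h1' h2'

lemma sub (hS : ∀ p q : E, p ∈ S → q ∈ S → p - q ∈ S)
    (h1 : EpsIn a ε S) (h2 : EpsIn b η S) : EpsIn (a - b) (ε + η) S := by
  obtain ⟨s, hs, h1'⟩ := h1
  obtain ⟨t, ht, h2'⟩ := h2
  refine ⟨s - t, hS s t hs ht, ?_⟩
  calc ‖a - b - (s - t)‖ = ‖(a - s) - (b - t)‖ := by abel_nf
  _ ≤ ‖a - s‖ + ‖b - t‖ := norm_sub_le _ _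
  _ ≤ ε + η := add_le_add h1' h2'

lemma zero (h0 : (0 : E) ∈ S) : EpsIn (0 : E) 0 S := ⟨0, h0, by simp⟩

lemma smul {𝕜 : Type*} [NormedField 𝕜] [NormedSpace 𝕜 E] (c : 𝕜)
    (hS : ∀ (k : 𝕜) (p : E), p ∈ S → k • p ∈ S)
    (h : EpsIn a ε S) : EpsIn (c • a) (‖c‖ * ε) S := by
  obtain ⟨s, hs, h'⟩ := h
  refine ⟨c • s, hS c s hs, ?_⟩
  rw [← smul_sub, norm_smul]
  exact mul_le_mul_of_nonneg_left h' (norm_nonneg c)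

lemma finset_sum {ι : Type*} (t : Finset ι) (f : ι → E) (e : ι → ℝ)
    (h0 : (0 : E) ∈ S) (hS : ∀ p q : E, p ∈ S → q ∈ S → p + q ∈ S)
    (h : ∀ i ∈ t, EpsIn (f i) (e i) S) :
    EpsIn (∑ i ∈ t, f i) (∑ i ∈ t, e i) S := by
  classical
  induction t using Finset.induction_on with
  | empty => simpa using zero h0
  | insert j t' hnotmem ih =>
      rw [Finset.sum_insert hnotmem, Finset.sum_insert hnotmem]
      exact add hS (h j (Finset.mem_insert_self j t'))
        (ih fun i hi => h i (Finset.mem_insert_of_mem hi))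

end EpsIn

section Helpers2
variable {A : Type*} [NonUnitalNormedRing A] [StarRing A] [CStarRing A]
  [NormedSpace ℂ A] [IsScalarTower ℂ A A] [SMulCommClass ℂ A A]
  [CompleteSpace A] [StarModule ℂ A]

lemma eq_zero_of_forall_mul_left (c : A) (hc : ∀ z : A, z * c = 0) : c = 0 := by
  have h := hc (star c)
  have : ‖c‖ * ‖c‖ = 0 := by rw [← CStarRing.norm_star_mul_self, h, norm_zero]
  have : ‖c‖ = 0 := by nlinarith [norm_nonneg c]
  simpa using norm_eq_zero.mp this

lemma eq_zero_of_forall_mul_right (c : A) (hc : ∀ z : A, c * z = 0) : c = 0 := by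
  have h := hc (star c)
  have : ‖c‖ * ‖c‖ = 0 := by rw [← CStarRing.norm_self_mul_star, h, norm_zero]
  have : ‖c‖ = 0 := by nlinarith [norm_nonneg c]
  simpa using norm_eq_zero.mp this

lemma DC.fst_mul_apply (m : 𝓜(ℂ, A)) (x y : A) : m.fst (x * y) = m.fst x * y := by
  have : ∀ z : A, z * (m.fst (x * y) - m.fst x * y) = 0 := by
    intro z
    rw [mul_sub, ← m.central, ← mul_assoc, m.central, mul_assoc, sub_self]
  have := eq_zero_of_forall_mul_left _ this
  exact sub_eq_zero.mp this

lemma DC.snd_mul_apply (m : 𝓜(ℂ, A)) (x y : A) : m.snd (x * y) = x * m.snd y := by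
  have : ∀ z : A, (m.snd (x * y) - x * m.snd y) * z = 0 := by
    intro z
    rw [sub_mul, m.central, mul_assoc, ← m.central, ← mul_assoc, sub_self]
  have := eq_zero_of_forall_mul_right _ this
  exact sub_eq_zero.mp this

lemma DC.fst_snd_comm (m m' : 𝓜(ℂ, A)) (x : A) :
    m.fst (m'.snd x) = m'.snd (m.fst x) := by
  have : ∀ z : A, (m.fst (m'.snd x) - m'.snd (m.fst x)) * z = 0 := by
    intro z
    rw [sub_mul, ← DC.fst_mul_apply, m'.central, DC.fst_mul_apply, m'.central, sub_self]
  have := eq_zero_of_forall_mul_right _ this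
  exact sub_eq_zero.mp this

lemma DC.norm_fst_apply_le (m : 𝓜(ℂ, A)) (x : A) : ‖m.fst x‖ ≤ ‖m‖ * ‖x‖ := by
  simpa [DoubleCentralizer.norm_fst] using m.fst.le_opNorm x

lemma DC.norm_snd_apply_le (m : 𝓜(ℂ, A)) (x : A) : ‖m.snd x‖ ≤ ‖m‖ * ‖x‖ := by
  simpa [DoubleCentralizer.norm_snd] using m.snd.le_opNorm x

lemma DC.mul_fst_apply (m m' : 𝓜(ℂ, A)) (x : A) : (m * m').fst x = m.fst (m'.fst x) := rfl

lemma DC.mul_snd_apply (m m' : 𝓜(ℂ, A)) (x : A) : (m * m').snd x = m'.snd (m.snd x) := rfl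

lemma DC.norm_one_le : ‖(1 : 𝓜(ℂ, A))‖ ≤ 1 := by
  rw [← DoubleCentralizer.norm_fst, DoubleCentralizer.one_fst]
  exact ContinuousLinearMap.norm_id_le

lemma DCnorm_one_le : ‖(1 : 𝓜(ℂ, A))‖ ≤ 1 := by
  rw [← DoubleCentralizer.norm_fst, DoubleCentralizer.one_fst]
  exact ContinuousLinearMap.norm_id_le

lemma DCnorm_pow_le {h : 𝓜(ℂ, A)} (hh : ‖h‖ ≤ 1) : ∀ n, ‖h ^ n‖ ≤ 1 := by
  intro n
  induction n with
  | zero => simpa using DCnorm_one_le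
  | succ n ih =>
      rw [pow_succ]
      calc ‖h ^ n * h‖ ≤ ‖h ^ n‖ * ‖h‖ := norm_mul_le _ _
      _ ≤ 1 * 1 := mul_le_mul ih hh (norm_nonneg _) zero_le_one
      _ = 1 := one_mul 1

lemma DCnorm_p_le {h : 𝓜(ℂ, A)} (hh : ‖h‖ ≤ 1) (n : ℕ) : ‖h ^ n * (1 - h)‖ ≤ 2 := by
  calc ‖h ^ n * (1 - h)‖ ≤ ‖h ^ n‖ * ‖(1 : 𝓜(ℂ, A)) - h‖ := norm_mul_le _ _
  _ ≤ 1 * 2 := by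
      apply mul_le_mul (DCnorm_pow_le hh n) _ (norm_nonneg _) zero_le_one
      calc ‖(1 : 𝓜(ℂ, A)) - h‖ ≤ ‖(1 : 𝓜(ℂ, A))‖ + ‖h‖ := norm_sub_le _ _
      _ ≤ 1 + 1 := add_le_add DCnorm_one_le hh
      _ = 2 := by norm_num
  _ = 2 := by norm_num

lemma p_eq_sub (h : 𝓜(ℂ, A)) (n : ℕ) : h ^ n * (1 - h) = h ^ n - h ^ (n + 1) := by
  rw [mul_sub, mul_one, ← pow_succ]

lemma p_recur (h : 𝓜(ℂ, A)) (n : ℕ) :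
    h ^ (n + 2) * (1 - h) = h ^ (n + 1) * (1 - h) - (h * (1 - h)) * (h ^ n * (1 - h)) := by
  have e1 : (h * (1 - h)) * (h ^ n * (1 - h))
      = (h ^ (n + 1) - h ^ (n + 2)) - (h ^ (n + 2) - h ^ (n + 3)) := by
    have : h * (1 - h) = h - h * h := by rw [mul_sub, mul_one]
    rw [this, p_eq_sub, sub_mul, mul_sub, mul_sub]
    have e2 : h * h ^ n = h ^ (n + 1) := (pow_succ' h n).symm
    have e3 : h * h ^ (n + 1) = h ^ (n + 2) := (pow_succ' h (n + 1)).symm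
    have e4 : h * h * h ^ n = h ^ (n + 2) := by rw [mul_assoc, e2, ← pow_succ']
    have e5 : h * h * h ^ (n + 1) = h ^ (n + 3) := by rw [mul_assoc, e3, ← pow_succ']
    rw [e2, e3, e4, e5]
    try abel
  rw [e1, p_eq_sub, p_eq_sub]
  try abel

lemma tele (h : 𝓜(ℂ, A)) : ∀ n, 1 ≤ n →
    h ^ n = h - ∑ k ∈ Finset.Ico 1 n, h ^ k * (1 - h) := by
  intro n hn
  induction n with
  | zero => omega
  | succ n ih =>
      rcases Nat.lt_or_ge n 1 with h1 | h1
      · interval_cases n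
        simp
      · have e1 : h ^ (n + 1) = h ^ n - h ^ n * (1 - h) := by
          rw [p_eq_sub]; abel
        rw [e1, Finset.sum_Ico_succ_top h1, ih h1]
        abel

lemma fst_sum (t : Finset ℕ) (F : ℕ → 𝓜(ℂ, A)) (x : A) :
    (∑ k ∈ t, F k).fst x = ∑ k ∈ t, (F k).fst x := by
  classical
  induction t using Finset.induction_on with
  | empty => simp [DoubleCentralizer.zero_fst]
  | insert j t' hnotmem ih =>
      rw [Finset.sum_insert hnotmem, Finset.sum_insert hnotmem,
        DoubleCentralizer.add_fst, ContinuousLinearMap.add_apply, ih]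

lemma sub_fst_apply (m m' : 𝓜(ℂ, A)) (x : A) : (m - m').fst x = m.fst x - m'.fst x := by
  rw [DoubleCentralizer.sub_fst, ContinuousLinearMap.sub_apply]

lemma comm_pow {h : 𝓜(ℂ, A)} {u : A} {c : ℝ} (hc : 0 ≤ c) (hh : ‖h‖ ≤ 1)
    (hcm : ‖h.fst u - h.snd u‖ ≤ c) :
    ∀ k : ℕ, ‖(h ^ k).fst u - (h ^ k).snd u‖ ≤ (k : ℝ) * c := by
  intro k
  induction k with
  | zero => simp [pow_zero, DoubleCentralizer.one_fst, DoubleCentralizer.one_snd]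
  | succ k ih =>
      have e1 : (h ^ (k + 1)).fst u = (h ^ k).fst (h.fst u) := by rw [pow_succ]; rfl
      have e2 : (h ^ (k + 1)).snd u = h.snd ((h ^ k).snd u) := by rw [pow_succ]; rfl
      have e3 : (h ^ k).fst (h.snd u) = h.snd ((h ^ k).fst u) := DC.fst_snd_comm _ _ _
      have key : (h ^ (k + 1)).fst u - (h ^ (k + 1)).snd u
          = (h ^ k).fst (h.fst u - h.snd u) + h.snd ((h ^ k).fst u - (h ^ k).snd u) := by
        rw [e1, e2, map_sub, map_sub, e3]
        abel
      rw [key]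
      have b1 : ‖(h ^ k).fst (h.fst u - h.snd u)‖ ≤ 1 * c := by
        refine le_trans (DC.norm_fst_apply_le _ _) ?_
        exact mul_le_mul (DCnorm_pow_le hh k) hcm (norm_nonneg _) zero_le_one
      have b2 : ‖h.snd ((h ^ k).fst u - (h ^ k).snd u)‖ ≤ 1 * ((k : ℝ) * c) := by
        refine le_trans (DC.norm_snd_apply_le _ _) ?_
        exact mul_le_mul hh ih (norm_nonneg _) zero_le_one
      calc ‖_ + _‖ ≤ ‖(h ^ k).fst (h.fst u - h.snd u)‖
            + ‖h.snd ((h ^ k).fst u - (h ^ k).snd u)‖ := norm_add_le _ _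
      _ ≤ 1 * c + 1 * ((k : ℝ) * c) := add_le_add b1 b2
      _ = ((k : ℝ) + 1) * c := by ring
      _ = ((k + 1 : ℕ) : ℝ) * c := by push_cast; ring


end Helpers2

lemma sqrt_est {s s' t : ℝ} (hs'0 : 0 < s') (hss : s' ≤ s) (hs1 : s ≤ 1) (ht : 0 ≤ t) :
    t * (Real.sqrt (Real.sqrt t) / Real.sqrt (t + s')
      - Real.sqrt (Real.sqrt t) / Real.sqrt (t + s)) ^ 2 ≤ Real.sqrt s := by
  have hs0 : 0 < s := lt_of_lt_of_le hs'0 hss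
  rcases eq_or_lt_of_le ht with h0 | ht0
  · rw [← h0]
    simp [Real.sqrt_zero, Real.sqrt_nonneg]
  set p := Real.sqrt t with hpdef
  set q := Real.sqrt (t + s') with hqdef
  set r := Real.sqrt (t + s) with hrdef
  have hp : 0 < p := Real.sqrt_pos.mpr ht0
  have hq : 0 < q := Real.sqrt_pos.mpr (by linarith)
  have hr : 0 < r := Real.sqrt_pos.mpr (by linarith)
  have hpq : p ≤ q := Real.sqrt_le_sqrt (by linarith)
  have hqr : q ≤ r := Real.sqrt_le_sqrt (by linarith)
  have hq2 : q * q = t + s' := Real.mul_self_sqrt (by linarith)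
  have hr2 : r * r = t + s := Real.mul_self_sqrt (by linarith)
  have hpp : p * p = t := Real.mul_self_sqrt ht
  set D := 1 / q - 1 / r with hDdef
  have hD0 : 0 ≤ D := sub_nonneg.mpr (one_div_le_one_div_of_le hq hqr)
  have hE : Real.sqrt p / q - Real.sqrt p / r = Real.sqrt p * D := by
    rw [hDdef]; field_simp
  have hE2 : (Real.sqrt p / q - Real.sqrt p / r) ^ 2 = p * D ^ 2 := by
    rw [hE, mul_pow, Real.sq_sqrt hp.le]
  rw [hE2]
  have key : D * (q * (r * (q + r))) = s - s' := by
    have : D * (q * (r * (q + r))) = r * r - q * q := by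
      rw [hDdef]; field_simp; ring
    rw [this, hq2, hr2]; ring
  have hprod : p * (p * p) ≤ q * (r * (q + r)) := by nlinarith
  have hD2 : D * (p * (p * p)) ≤ s := by
    calc D * (p * (p * p)) ≤ D * (q * (r * (q + r))) :=
          mul_le_mul_of_nonneg_left hprod hD0
    _ = s - s' := key
    _ ≤ s := by linarith
  have hD1 : D ≤ 1 / p := by
    have h1 : D ≤ 1 / q := by
      rw [hDdef]; have : 0 ≤ 1 / r := by positivity
      linarith
    exact h1.trans (one_div_le_one_div_of_le hp hpq)
  have hpD : p * D ≤ 1 := by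
    calc p * D ≤ p * (1 / p) := mul_le_mul_of_nonneg_left hD1 hp.le
    _ = 1 := by field_simp
  rcases le_or_gt t s with hts | hts
  · have hp_le : p ≤ Real.sqrt s := Real.sqrt_le_sqrt hts
    calc t * (p * D ^ 2) = (p * D) * (p * D) * p := by rw [← hpp]; ring
    _ ≤ 1 * 1 * p := by
        apply mul_le_mul_of_nonneg_right _ hp.le
        have h00 : 0 ≤ p * D := by positivity
        exact mul_le_mul hpD hpD h00 (by linarith)
    _ = p := by ring
    _ ≤ Real.sqrt s := hp_le
  · have hsp : Real.sqrt s ≤ p := by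
      rw [hpdef]; exact Real.sqrt_le_sqrt hts.le
    have hss2 : Real.sqrt s * Real.sqrt s = s := Real.mul_self_sqrt hs0.le
    have hps : 0 < Real.sqrt s := Real.sqrt_pos.mpr hs0
    rw [← mul_le_mul_iff_of_pos_right hp]
    calc t * (p * D ^ 2) * p = (D * (p * (p * p))) * (p * D) := by rw [← hpp]; ring
    _ ≤ s * 1 := mul_le_mul hD2 hpD (by positivity) hs0.le
    _ = Real.sqrt s * Real.sqrt s := by rw [hss2, mul_one]
    _ ≤ Real.sqrt s * p := mul_le_mul_of_nonneg_left hsp hps.le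


section Fact
variable {A : Type*} [NonUnitalCStarAlgebra A]

theorem exists_eq_mul (x : A) : ∃ y z : A, x = y * z := by
  classical
  set a : A := star x * x with ha_def
  have ha : IsSelfAdjoint a := IsSelfAdjoint.star_mul_self x
  have hqs : ∀ t ∈ quasispectrum ℝ a, 0 ≤ t := by
    intro t htmem
    rw [Unitization.quasispectrum_eq_spectrum_inr' ℝ ℂ] at htmem
    have heq : (↑a : Unitization ℂ A) = star (↑x : Unitization ℂ A) * ↑x := by
      rw [ha_def, Unitization.inr_mul, Unitization.inr_star]
    rw [heq] at htmem
    exact spectrum_star_mul_self_nonneg t htmem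
  set f : ℝ → ℝ := fun t => Real.sqrt (Real.sqrt t) with hf_def
  have hf_cont : Continuous f := Real.continuous_sqrt.comp Real.continuous_sqrt
  have hf0 : f 0 = 0 := by simp [hf_def]
  set ε : ℕ → ℝ := fun n => 1 / (n + 1) with hε_def
  have hε_pos : ∀ n, 0 < ε n := fun n => by positivity
  have hε_le_one : ∀ n, ε n ≤ 1 := fun n => by
    rw [hε_def]
    rw [div_le_one (by positivity)]
    push_cast
    linarith [Nat.cast_nonneg (α := ℝ) n]
  have hε_anti : ∀ {n m : ℕ}, n ≤ m → ε m ≤ ε n := by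
    intro n m hnm
    rw [hε_def]
    apply one_div_le_one_div_of_le (by positivity)
    push_cast
    exact add_le_add (Nat.cast_le.mpr hnm) le_rfl
  set g : ℕ → ℝ → ℝ := fun n t => f t / Real.sqrt (t + ε n) with hg_def
  have hden_cont : ∀ (s : ℝ), 0 < s → ∀ F : ℝ → ℝ, Continuous F → (∀ t, 0 ≤ F t) →
      ContinuousOn (fun t => F t / Real.sqrt (t + s)) (quasispectrum ℝ a) := by
    intro s hs F hFc _hF0
    intro t htmem
    have h1 : (0:ℝ) < t + s := by have := hqs t htmem; linarith
    exact ContinuousAt.continuousWithinAt <|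
      (hFc.continuousAt).div
        ((Real.continuous_sqrt.comp (continuous_id.add continuous_const)).continuousAt)
        (ne_of_gt (Real.sqrt_pos.mpr h1))
  have hg_cont : ∀ n, ContinuousOn (g n) (quasispectrum ℝ a) := fun n =>
    hden_cont (ε n) (hε_pos n) f hf_cont (fun t => Real.sqrt_nonneg _)
  have hg0 : ∀ n, g n 0 = 0 := fun n => by
    rw [hg_def]; simp [hf0]
  -- key norm estimate
  have keyn : ∀ (F : ℝ → ℝ), ContinuousOn F (quasispectrum ℝ a) → F 0 = 0 → ∀ c : ℝ,
      (∀ t ∈ quasispectrum ℝ a, t * F t ^ 2 ≤ c) → ‖x * cfcₙ F a‖ ^ 2 ≤ c := by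
    intro F hF hF0 c hc
    set w := cfcₙ F a with hw_def
    have hw : IsSelfAdjoint w := cfcₙ_predicate F a
    have h1 : star (x * w) * (x * w) = w * (a * w) := by
      rw [star_mul, hw.star_eq, ha_def]
      simp [mul_assoc]
    have h2 : ‖x * w‖ ^ 2 = ‖w * (a * w)‖ := by
      rw [← h1, sq, ← CStarRing.norm_star_mul_self]
    have hcont_tF : ContinuousOn (fun t : ℝ => t * F t) (quasispectrum ℝ a) :=
      continuousOn_id.mul hF
    have e1 : cfcₙ (fun t : ℝ => t * F t) a = a * w := by
      rw [cfcₙ_mul (fun t : ℝ => t) F a continuousOn_id rfl hF hF0, cfcₙ_id' ℝ a]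
    have h3 : w * (a * w) = cfcₙ (fun t => F t * (t * F t)) a := by
      rw [cfcₙ_mul F (fun t => t * F t) a hF hF0 hcont_tF (by simp), e1]
    rw [h2, h3]
    apply norm_cfcₙ_le
    intro t htmem
    have ht0 := hqs t htmem
    have : F t * (t * F t) = t * F t ^ 2 := by ring
    rw [Real.norm_eq_abs, this, abs_of_nonneg (by positivity)]
    exact hc t htmem
  set y : ℕ → A := fun n => x * cfcₙ (g n) a with hy_def
  have hdist : ∀ K n m : ℕ, K ≤ n → K ≤ m →
      dist (y n) (y m) ≤ Real.sqrt (Real.sqrt (ε K)) := by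
    intro K n m hn hm
    rw [dist_eq_norm]
    have hsub : y n - y m = x * cfcₙ (fun t => g n t - g m t) a := by
      rw [hy_def]
      simp only
      rw [cfcₙ_sub (g n) (g m) a (hg_cont n) (hg0 n) (hg_cont m) (hg0 m), mul_sub]
    have hb : ∀ t ∈ quasispectrum ℝ a, t * (g n t - g m t) ^ 2 ≤ Real.sqrt (ε K) := by
      intro t htm
      have ht0 := hqs t htm
      rcases le_total (ε n) (ε m) with hc | hc
      · have h := sqrt_est (hε_pos n) hc (hε_le_one m) ht0
        exact le_trans h (Real.sqrt_le_sqrt (hε_anti hm))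
      · have h := sqrt_est (hε_pos m) hc (hε_le_one n) ht0
        rw [show (g n t - g m t) ^ 2 = (g m t - g n t) ^ 2 by ring]
        exact le_trans h (Real.sqrt_le_sqrt (hε_anti hn))
    have hsq := keyn (fun t => g n t - g m t) ((hg_cont n).sub (hg_cont m)) (by show g n 0 - g m 0 = 0; rw [hg0 n, hg0 m, sub_zero]) _ hb
    rw [← hsub] at hsq
    have hn0 : 0 ≤ ‖y n - y m‖ := norm_nonneg _
    nlinarith [Real.sq_sqrt (Real.sqrt_nonneg (ε K)),
      Real.sqrt_nonneg (Real.sqrt (ε K))]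
  have hεtend : Filter.Tendsto ε Filter.atTop (nhds 0) := tendsto_one_div_add_atTop_nhds_zero_nat
  have hbtend : Filter.Tendsto (fun K => Real.sqrt (Real.sqrt (ε K))) Filter.atTop (nhds 0) := by
    have h1 : Filter.Tendsto (fun s : ℝ => Real.sqrt (Real.sqrt s)) (nhds 0) (nhds 0) := by
      have := (Real.continuous_sqrt.comp Real.continuous_sqrt).tendsto 0
      simpa [Function.comp_def] using this
    exact h1.comp hεtend
  have hcauchy : CauchySeq y := cauchySeq_of_le_tendsto_0 _ (fun n m K hn hm => hdist K n m hn hm) hbtend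
  obtain ⟨Y, hY⟩ := cauchySeq_tendsto_of_complete hcauchy
  set z := cfcₙ f a with hz_def
  have hyz : ∀ n, y n * z = x * cfcₙ (fun t => Real.sqrt t / Real.sqrt (t + ε n)) a := by
    intro n
    rw [hy_def, hz_def]
    simp only
    rw [mul_assoc, ← cfcₙ_mul (g n) f a (hg_cont n) (hg0 n) hf_cont.continuousOn hf0]
    congr 1
    apply cfcₙ_congr
    intro t _
    rw [hg_def]
    simp only
    rw [div_mul_eq_mul_div, hf_def]
    simp only
    rw [Real.mul_self_sqrt (Real.sqrt_nonneg t)]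
  have hclose : ∀ n, ‖y n * z - x‖ ^ 2 ≤ ε n := by
    intro n
    set k : ℝ → ℝ := fun t => Real.sqrt t / Real.sqrt (t + ε n) with hk_def
    have hk_cont : ContinuousOn k (quasispectrum ℝ a) :=
      hden_cont (ε n) (hε_pos n) Real.sqrt Real.continuous_sqrt (fun t => Real.sqrt_nonneg _)
    have hk0 : k 0 = 0 := by rw [hk_def]; simp
    set w' := cfcₙ k a with hw'_def
    have hw' : IsSelfAdjoint w' := cfcₙ_predicate k a
    rw [hyz n, ← hk_def, ← hw'_def]
    have hstar : star (x * w' - x) * (x * w' - x) = w' * (a * w') - w' * a - a * w' + a := by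
      rw [star_sub, star_mul, hw'.star_eq, ha_def]
      simp only [mul_sub, sub_mul, mul_assoc]
      abel
    have hcont_tk : ContinuousOn (fun t : ℝ => t * k t) (quasispectrum ℝ a) :=
      continuousOn_id.mul hk_cont
    have hcont_kt : ContinuousOn (fun t : ℝ => k t * t) (quasispectrum ℝ a) :=
      hk_cont.mul continuousOn_id
    have e1 : cfcₙ (fun t : ℝ => t * k t) a = a * w' := by
      rw [cfcₙ_mul (fun t : ℝ => t) k a continuousOn_id rfl hk_cont hk0, cfcₙ_id' ℝ a]
    have e2 : cfcₙ (fun t : ℝ => k t * (t * k t)) a = w' * (a * w') := by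
      rw [cfcₙ_mul k (fun t => t * k t) a hk_cont hk0 hcont_tk (by simp), e1]
    have e3 : cfcₙ (fun t : ℝ => k t * t) a = w' * a := by
      rw [cfcₙ_mul k (fun t : ℝ => t) a hk_cont hk0 continuousOn_id rfl, cfcₙ_id' ℝ a]
    have e4 : cfcₙ (fun t : ℝ => k t * (t * k t) - k t * t) a = w' * (a * w') - w' * a := by
      rw [cfcₙ_sub (fun t : ℝ => k t * (t * k t)) (fun t : ℝ => k t * t) a (hk_cont.mul hcont_tk) (by simp) hcont_kt (by simp [hk0]), e2, e3]
    have e5 : cfcₙ (fun t : ℝ => (k t * (t * k t) - k t * t) - t * k t) a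
        = w' * (a * w') - w' * a - a * w' := by
      rw [cfcₙ_sub (fun t : ℝ => k t * (t * k t) - k t * t) (fun t : ℝ => t * k t) a ((hk_cont.mul hcont_tk).sub hcont_kt) (by simp [hk0]) hcont_tk (by simp), e4, e1]
    have e6 : cfcₙ (fun t : ℝ => ((k t * (t * k t) - k t * t) - t * k t) + t) a
        = w' * (a * w') - w' * a - a * w' + a := by
      rw [cfcₙ_add (fun t : ℝ => k t * (t * k t) - k t * t - t * k t) (fun t : ℝ => t) a
        (((hk_cont.mul hcont_tk).sub hcont_kt).sub hcont_tk) (by simp [hk0])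
        continuousOn_id rfl, e5, cfcₙ_id' ℝ a]
    have hnorm : ‖x * w' - x‖ ^ 2 = ‖cfcₙ (fun t : ℝ => ((k t * (t * k t) - k t * t) - t * k t) + t) a‖ := by
      rw [e6, ← hstar, sq, ← CStarRing.norm_star_mul_self]
    rw [hnorm]
    apply norm_cfcₙ_le
    intro t htm
    have ht0 := hqs t htm
    have hts : (0:ℝ) < t + ε n := by have := hε_pos n; linarith
    have hK0 : 0 ≤ k t := by
      rw [hk_def]; positivity
    have hK1 : k t ≤ 1 := by
      rw [hk_def]
      simp only
      rw [div_le_one (Real.sqrt_pos.mpr hts)]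
      exact Real.sqrt_le_sqrt (by linarith [hε_pos n])
    have hk2 : k t ^ 2 = t / (t + ε n) := by
      rw [hk_def]
      simp only
      rw [div_pow, Real.sq_sqrt ht0, Real.sq_sqrt hts.le]
    have hform : ((k t * (t * k t) - k t * t) - t * k t) + t = t * (1 - k t) ^ 2 := by ring
    rw [hform, Real.norm_eq_abs, abs_of_nonneg (by positivity)]
    have h1 : t * (1 - k t) ^ 2 ≤ t * (1 - k t ^ 2) := by
      nlinarith [mul_nonneg ht0 (mul_nonneg hK0 (sub_nonneg.mpr hK1))]
    have h2 : t * (1 - k t ^ 2) = t * ε n / (t + ε n) := by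
      rw [hk2]
      field_simp
      ring
    have h3 : t * ε n / (t + ε n) ≤ ε n := by
      rw [div_le_iff₀ hts]
      nlinarith [hε_pos n]
    linarith
  have hconv : Filter.Tendsto (fun n => y n * z) Filter.atTop (nhds x) := by
    rw [tendsto_iff_norm_sub_tendsto_zero]
    apply squeeze_zero (g := fun n => Real.sqrt (ε n)) (fun n => norm_nonneg _)
    · intro n
      have h := hclose n
      have h0 : 0 ≤ ‖y n * z - x‖ := norm_nonneg _
      nlinarith [Real.sq_sqrt (hε_pos n).le, Real.sqrt_nonneg (ε n)]
    · have h1 : Filter.Tendsto (fun s : ℝ => Real.sqrt s) (nhds 0) (nhds 0) := by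
        have := Real.continuous_sqrt.tendsto 0
        simpa using this
      exact h1.comp hεtend
  have hconv2 : Filter.Tendsto (fun n => y n * z) Filter.atTop (nhds (Y * z)) :=
    hY.mul tendsto_const_nhds
  exact ⟨Y, z, (tendsto_nhds_unique hconv2 hconv).symm⟩

end Fact

lemma exists_chain {A : Type*} [NonUnitalCStarAlgebra A] (u : A) :
    ∃ v w : ℕ → A, w 0 = u ∧ ∀ j, w j = v j * w (j + 1) := by
  obtain ⟨F1, F2, hF⟩ : ∃ F1 F2 : A → A, ∀ u : A, u = F1 u * F2 u := by
    choose F1 F2 hh using fun u : A => exists_eq_mul u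
    exact ⟨F1, F2, hh⟩
  refine ⟨fun j => F1 (F2^[j] u), fun j => F2^[j] u, rfl, fun j => ?_⟩
  show F2^[j] u = F1 (F2^[j] u) * F2^[j + 1] u
  rw [Function.iterate_succ_apply']
  exact hF _

end Helpers

lemma sub_snd_apply (m m' : 𝓜(ℂ, A)) (x : A) : (m - m').snd x = m.snd x - m'.snd x := by
  rw [DoubleCentralizer.sub_snd, ContinuousLinearMap.sub_apply]

/-- Lemma 3.3. -/
theorem stmt_11 (X₀ : Submodule ℂ A) (hX₀ : FiniteDimensional ℂ X₀)
    (N : ℕ) (hN : 2 ≤ N) :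
    ∃ X : Submodule ℂ A, FiniteDimensional ℂ X ∧ X₀ ≤ X ∧
      ∀ δ > (0 : ℝ), ∃ δ' > (0 : ℝ),
        ∀ (h : 𝓜(ℂ, A)) (C D : NonUnitalStarSubalgebra ℂ A),
          IsClosed (C : Set A) → IsClosed (D : Set A) →
          IsIdealStructure δ' (X : Set A) h C D →
          ∀ x ∈ X₀,
            ‖h.fst x - h.snd x‖ ≤ δ * ‖x‖ ∧
            ∀ n : ℕ, 1 ≤ n → n ≤ N →
              EpsIn ((h ^ n).fst x) (δ * ‖x‖) (C : Set A) ∧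
              EpsIn ((h ^ n * (1 - h)).fst x) (δ * ‖x‖) (D : Set A) ∧
              EpsIn ((h ^ n * (1 - h)).fst x) (δ * ‖x‖) ((C : Set A) ∩ (D : Set A)) := by
  classical
  letI : NonUnitalCStarAlgebra A :=
    { ‹NonUnitalNormedRing A›, ‹StarRing A›, ‹CompleteSpace A›, ‹CStarRing A›,
      (inferInstance : NormedSpace ℂ A), (inferInstance : IsScalarTower ℂ A A),
      (inferInstance : SMulCommClass ℂ A A), (inferInstance : StarModule ℂ A) with }
  set d := Module.finrank ℂ X₀ with hd
  let bas : Module.Basis (Fin d) ℂ X₀ := Module.finBasis ℂ X₀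
  obtain ⟨v, w, hw0, hwrec⟩ :
      ∃ v w : Fin d → ℕ → A, (∀ i, w i 0 = ((bas i : X₀) : A)) ∧
        ∀ i j, w i j = v i j * w i (j + 1) := by
    choose v w h1 h2 using fun i : Fin d => exists_chain (((bas i : X₀) : A))
    exact ⟨v, w, h1, h2⟩
  set SpanSet : Set A := (Set.range fun p : Fin d × Fin (N + 1) => v p.1 p.2)
      ∪ (Set.range fun p : Fin d × Fin (N + 1) => w p.1 p.2) with hSpanSet
  haveI : FiniteDimensional ℂ (Submodule.span ℂ SpanSet) :=
    FiniteDimensional.span_of_finite ℂ ((Set.finite_range _).union (Set.finite_range _))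
  refine ⟨X₀ ⊔ Submodule.span ℂ SpanSet, Submodule.finiteDimensional_sup _ _, le_sup_left, ?_⟩
  set X := X₀ ⊔ Submodule.span ℂ SpanSet with hX
  have hwX : ∀ (i : Fin d) (j : ℕ), j ≤ N → w i j ∈ X := by
    intro i j hj
    have hmem : w i j ∈ SpanSet := Or.inr ⟨(i, ⟨j, by omega⟩), rfl⟩
    exact Submodule.mem_sup_right (Submodule.subset_span hmem)
  have hvX : ∀ (i : Fin d) (j : ℕ), j ≤ N → v i j ∈ X := by
    intro i j hj
    have hmem : v i j ∈ SpanSet := Or.inl ⟨(i, ⟨j, by omega⟩), rfl⟩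
    exact Submodule.mem_sup_right (Submodule.subset_span hmem)
  have hX₀X : ∀ x ∈ X₀, x ∈ X := fun x hx => Submodule.mem_sup_left hx
  -- constants
  set B : ℝ := 1 + ∑ i : Fin d, ∑ j ∈ Finset.range (N + 1), (‖v i j‖ + ‖w i j‖) with hB
  have hsum_nonneg : (0:ℝ) ≤ ∑ i : Fin d, ∑ j ∈ Finset.range (N + 1), (‖v i j‖ + ‖w i j‖) :=
    Finset.sum_nonneg fun i _ => Finset.sum_nonneg fun j _ => by positivity
  have hB1 : 1 ≤ B := by rw [hB]; linarith
  have hBbound : ∀ (i : Fin d) (j : ℕ), j ≤ N → ‖v i j‖ ≤ B ∧ ‖w i j‖ ≤ B := by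
    intro i j hj
    have hmem : j ∈ Finset.range (N + 1) := Finset.mem_range.mpr (by omega)
    have h1 : ‖v i j‖ + ‖w i j‖ ≤ ∑ j' ∈ Finset.range (N+1), (‖v i j'‖ + ‖w i j'‖) :=
      Finset.single_le_sum (f := fun j' => ‖v i j'‖ + ‖w i j'‖) (fun j' _ => by positivity) hmem
    have h2 : ∑ j' ∈ Finset.range (N+1), (‖v i j'‖ + ‖w i j'‖)
        ≤ ∑ i' : Fin d, ∑ j' ∈ Finset.range (N+1), (‖v i' j'‖ + ‖w i' j'‖) :=
      Finset.single_le_sum (f := fun i' => ∑ j' ∈ Finset.range (N+1), (‖v i' j'‖ + ‖w i' j'‖))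
        (fun i' _ => Finset.sum_nonneg fun j' _ => by positivity) (Finset.mem_univ i)
    constructor <;> nlinarith [norm_nonneg (v i j), norm_nonneg (w i j)]
  set ℓf : Fin d → (X₀ →L[ℂ] ℂ) := fun i =>
    LinearMap.toContinuousLinearMap ((Finsupp.lapply i).comp (bas.repr.toLinearMap)) with hℓf
  set Kc : ℝ := 1 + ∑ i : Fin d, ‖ℓf i‖ with hKc
  have hKc1 : 1 ≤ Kc := by
    rw [hKc]
    have : (0:ℝ) ≤ ∑ i : Fin d, ‖ℓf i‖ := Finset.sum_nonneg fun i _ => norm_nonneg (ℓf i)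
    linarith
  have hrepr : ∀ (u : X₀) (i : Fin d), ‖bas.repr u i‖ ≤ Kc * ‖u‖ := by
    intro u i
    have h2 := (ℓf i).le_opNorm u
    have h3 : ‖ℓf i‖ ≤ Kc := by
      rw [hKc]
      have := Finset.single_le_sum (f := fun i' : Fin d => ‖ℓf i'‖)
        (fun i' _ => norm_nonneg (ℓf i')) (Finset.mem_univ i)
      linarith
    have h1 : ‖bas.repr u i‖ = ‖ℓf i u‖ := rfl
    rw [h1]
    calc ‖ℓf i u‖ ≤ ‖ℓf i‖ * ‖u‖ := h2
    _ ≤ Kc * ‖u‖ := mul_le_mul_of_nonneg_right h3 (norm_nonneg _)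
  set C0 : ℝ := 4 + 4 * B + (4 * (N:ℝ) + 4) * B^2 with hC0
  have hNr : (0:ℝ) ≤ (N:ℝ) := Nat.cast_nonneg N
  have hC01 : 1 ≤ C0 := by rw [hC0]; nlinarith [sq_nonneg B, mul_nonneg hNr (sq_nonneg B)]
  have hC03 : 3 ≤ C0 := by rw [hC0]; nlinarith [sq_nonneg B, mul_nonneg hNr (sq_nonneg B)]
  have hC0B : B ≤ C0 := by rw [hC0]; nlinarith [sq_nonneg B, mul_nonneg hNr (sq_nonneg B)]
  have hC03B : 3 * B ≤ C0 := by rw [hC0]; nlinarith [sq_nonneg B, mul_nonneg hNr (sq_nonneg B)]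
  set G : ℝ := (d:ℝ) * Kc * C0 ^ N with hG
  have hG0 : 0 ≤ G := by
    rw [hG]
    have : (0:ℝ) < C0 ^ N := pow_pos (by linarith) N
    positivity
  set T : ℝ := ((N:ℝ) + 1) * (1 + G) + 1 with hT
  have hT1 : 1 ≤ T := by rw [hT]; nlinarith [mul_nonneg hNr hG0]
  have hTpos : 0 < T := lt_of_lt_of_le one_pos hT1
  intro δ hδ
  refine ⟨min 1 (δ / T), lt_min one_pos (by positivity), ?_⟩
  set δ' := min 1 (δ / T) with hδ'def
  have hδ'pos : 0 < δ' := lt_min one_pos (by positivity)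
  have hδ'1 : δ' ≤ 1 := min_le_left _ _
  have hδ'T : T * δ' ≤ δ := by
    have h1 : δ' ≤ δ / T := min_le_right _ _
    calc T * δ' ≤ T * (δ / T) := mul_le_mul_of_nonneg_left h1 hTpos.le
    _ = δ := by field_simp
  intro h C D _hCcl _hDcl hstr
  obtain ⟨-, hh1, hmain⟩ := hstr
  -- closure properties of C ∩ D and C
  have hS0 : (0:A) ∈ (C : Set A) ∩ (D : Set A) := ⟨zero_mem C, zero_mem D⟩
  have hSadd : ∀ p q : A, p ∈ (C : Set A) ∩ (D : Set A) → q ∈ (C : Set A) ∩ (D : Set A) →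
      p + q ∈ (C : Set A) ∩ (D : Set A) := fun p q hp hq => ⟨add_mem hp.1 hq.1, add_mem hp.2 hq.2⟩
  have hSsub : ∀ p q : A, p ∈ (C : Set A) ∩ (D : Set A) → q ∈ (C : Set A) ∩ (D : Set A) →
      p - q ∈ (C : Set A) ∩ (D : Set A) := fun p q hp hq => ⟨sub_mem hp.1 hq.1, sub_mem hp.2 hq.2⟩
  have hSmulc : ∀ p q : A, p ∈ (C : Set A) ∩ (D : Set A) → q ∈ (C : Set A) ∩ (D : Set A) →
      p * q ∈ (C : Set A) ∩ (D : Set A) := fun p q hp hq => ⟨mul_mem hp.1 hq.1, mul_mem hp.2 hq.2⟩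
  have hSsmul : ∀ (k : ℂ) (p : A), p ∈ (C : Set A) ∩ (D : Set A) →
      k • p ∈ (C : Set A) ∩ (D : Set A) :=
    fun k p hp => ⟨SMulMemClass.smul_mem k hp.1, SMulMemClass.smul_mem k hp.2⟩
  have hCs0 : (0:A) ∈ (C : Set A) := zero_mem C
  have hCsadd : ∀ p q : A, p ∈ (C : Set A) → q ∈ (C : Set A) → p + q ∈ (C : Set A) :=
    fun p q hp hq => add_mem hp hq
  have hCssub : ∀ p q : A, p ∈ (C : Set A) → q ∈ (C : Set A) → p - q ∈ (C : Set A) :=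
    fun p q hp hq => sub_mem hp hq
  have hCssmul : ∀ (k : ℂ) (p : A), p ∈ (C : Set A) → k • p ∈ (C : Set A) :=
    fun k p hp => SMulMemClass.smul_mem k hp
  -- commutator estimate for pₙ = hⁿ(1-h)
  have hcommp : ∀ u, u ∈ X → ∀ n : ℕ,
      ‖(h ^ n * (1 - h)).fst u - (h ^ n * (1 - h)).snd u‖ ≤ (2 * (n:ℝ) + 2) * δ' * ‖u‖ := by
    intro u hu n
    have hb := (hmain u hu).1
    have h1 := comm_pow (mul_nonneg hδ'pos.le (norm_nonneg u)) hh1 hb n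
    have h2 := comm_pow (mul_nonneg hδ'pos.le (norm_nonneg u)) hh1 hb (n + 1)
    rw [p_eq_sub h n, sub_fst_apply, sub_snd_apply]
    have e : (h ^ n).fst u - (h ^ (n+1)).fst u - ((h ^ n).snd u - (h ^ (n+1)).snd u)
        = ((h ^ n).fst u - (h ^ n).snd u) - ((h ^ (n+1)).fst u - (h ^ (n+1)).snd u) := by abel
    rw [e]
    have h3 := norm_sub_le ((h ^ n).fst u - (h ^ n).snd u)
      ((h ^ (n+1)).fst u - (h ^ (n+1)).snd u)
    push_cast at h1 h2 ⊢
    have hx0 : (0:ℝ) ≤ δ' * ‖u‖ := mul_nonneg hδ'pos.le (norm_nonneg u)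
    nlinarith [hx0]
  -- bound on ‖pₙ‖ and ‖a‖
  have haMn : ‖h * (1 - h)‖ ≤ 2 := by
    have := DCnorm_p_le hh1 1
    rwa [pow_one] at this
  -- the main induction
  have QD : ∀ n : ℕ, ∀ i : Fin d, ∀ j : ℕ, 1 ≤ n → n ≤ N → j + 1 ≤ N → n + 2*j ≤ 2*N →
      EpsIn ((h ^ n * (1 - h)).fst (w i j)) (C0 ^ n * δ') ((C : Set A) ∩ (D : Set A)) := by
    intro n
    induction n using Nat.strong_induction_on with
    | _ n IH =>
      intro i j h1 hnN hjN hcond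
      obtain rfl | rfl | hm3 : n = 1 ∨ n = 2 ∨ 3 ≤ n := by omega
      · -- base case n = 1
        have hq := (hmain (w i j) (hwX i j (by omega))).2.2.2.1
        have hq' : EpsIn ((h ^ 1 * (1 - h)).fst (w i j)) (δ' * ‖w i j‖)
            ((C : Set A) ∩ (D : Set A)) := by rwa [pow_one]
        apply hq'.mono
        have hw := (hBbound i j (by omega)).2
        have hle : δ' * ‖w i j‖ ≤ C0 * δ' := by
          have := mul_le_mul_of_nonneg_left (hw.trans hC0B) hδ'pos.le
          linarith
        calc δ' * ‖w i j‖ ≤ C0 * δ' := hle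
        _ = C0 ^ 1 * δ' := by rw [pow_one]
      · -- base case n = 2
        have hq := (hmain (w i j) (hwX i j (by omega))).2.2.2.2
        apply hq.mono
        have hw := (hBbound i j (by omega)).2
        have hC2 : C0 ≤ C0 ^ 2 := by
          have h9 : C0 ^ 2 = C0 * C0 := sq C0
          have h10 := mul_le_mul_of_nonneg_left hC01 (show (0:ℝ) ≤ C0 by linarith)
          linarith
        have := mul_le_mul_of_nonneg_left (hw.trans (hC0B.trans hC2)) hδ'pos.le
        linarith
      · -- inductive step
        obtain ⟨m, rfl⟩ : ∃ m, n = m + 3 := ⟨n - 3, by omega⟩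
        have IH1 := IH (m+2) (by omega) i j (by omega) (by omega) (by omega) (by omega)
        have IH0 := IH (m+1) (by omega) i (j+1) (by omega) (by omega) (by omega) (by omega)
        obtain ⟨cv, hcvS, hcv⟩ := (hmain (v i j) (hvX i j (by omega))).2.2.2.1
        obtain ⟨s0, hs0S, hs0⟩ := IH0
        obtain ⟨s1, hs1S, hs1⟩ := IH1
        have hnw' : ‖w i (j+1)‖ ≤ B := (hBbound i (j+1) (by omega)).2
        have hnv : ‖v i j‖ ≤ B := (hBbound i j (by omega)).1
        set q : A := (h ^ (m+1) * (1 - h)).fst (w i (j+1)) with hqdef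
        set cterm : A := (h ^ (m+1) * (1 - h)).fst (v i j) - (h ^ (m+1) * (1 - h)).snd (v i j)
          with hcterm
        have hsplit : (h ^ (m+1) * (1 - h)).fst (w i j)
            = cterm * w i (j+1) + v i j * q := by
          conv_lhs => rw [hwrec i j]
          rw [DC.fst_mul_apply, hcterm, sub_mul, (h ^ (m+1) * (1 - h)).central]
          abel
        have e0 : h ^ (m+3) * (1 - h)
            = h ^ (m+2) * (1 - h) - (h * (1 - h)) * (h ^ (m+1) * (1 - h)) := by
          have e := p_recur h (m+1)
          simpa [show m+1+2 = m+3 from by omega, show m+1+1 = m+2 from by omega] using e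
        have hkey : (h ^ (m+3) * (1 - h)).fst (w i j)
            = (h ^ (m+2) * (1 - h)).fst (w i j)
              - (h * (1-h)).fst (cterm * w i (j+1))
              - (h * (1-h)).fst (v i j * q) := by
          rw [e0, sub_fst_apply, DC.mul_fst_apply (h * (1 - h)) (h ^ (m+1) * (1 - h)) (w i j), hsplit, map_add]
          abel
        refine ⟨s1 - cv * s0, hSsub _ _ hs1S (hSmulc _ _ hcvS hs0S), ?_⟩
        have hdecomp : (h ^ (m+3) * (1 - h)).fst (w i j) - (s1 - cv * s0)
            = ((h ^ (m+2) * (1 - h)).fst (w i j) - s1)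
              - (h * (1-h)).fst (cterm * w i (j+1))
              - ((h * (1-h)).fst (v i j) * (q - s0) + ((h * (1-h)).fst (v i j) - cv) * s0) := by
          rw [hkey, DC.fst_mul_apply (h * (1-h)) (v i j) q]
          generalize (h ^ (m+2) * (1 - h)).fst (w i j) = P2
          generalize (h * (1-h)).fst (cterm * w i (j+1)) = A2
          generalize (h * (1-h)).fst (v i j) = aMv
          noncomm_ring
        rw [hdecomp]
        -- norm bounds for the pieces
        have hmδ0 : (0:ℝ) ≤ (2*((m:ℝ)+1)+2) * δ' := by
          have : (0:ℝ) ≤ (2*((m:ℝ)+1)+2) := by positivity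
          exact mul_nonneg this hδ'pos.le
        have hB0 : (0:ℝ) ≤ B := by linarith
        have n2 : ‖(h * (1-h)).fst (cterm * w i (j+1))‖
            ≤ 2 * ((2*((m:ℝ)+1)+2) * δ' * B * B) := by
          have hc := hcommp (v i j) (hvX i j (by omega)) (m+1)
          push_cast at hc
          have hc' : ‖cterm‖ ≤ (2*((m:ℝ)+1)+2) * δ' * B := by
            rw [hcterm]
            refine le_trans hc ?_
            rw [mul_assoc]
            rw [mul_assoc] at hc ⊢
            exact mul_le_mul_of_nonneg_left
              (mul_le_mul_of_nonneg_left hnv hδ'pos.le)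
              (by positivity)
          calc ‖(h * (1-h)).fst (cterm * w i (j+1))‖
              ≤ ‖h * (1-h)‖ * ‖cterm * w i (j+1)‖ := DC.norm_fst_apply_le _ _
          _ ≤ 2 * ‖cterm * w i (j+1)‖ :=
              mul_le_mul_of_nonneg_right haMn (norm_nonneg _)
          _ ≤ 2 * (‖cterm‖ * ‖w i (j+1)‖) := by
              have := norm_mul_le cterm (w i (j+1)); linarith
          _ ≤ 2 * (((2*((m:ℝ)+1)+2) * δ' * B) * B) := by
              have h0 : (0:ℝ) ≤ (2*((m:ℝ)+1)+2) * δ' * B := mul_nonneg hmδ0 hB0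
              have := mul_le_mul hc' hnw' (norm_nonneg _) h0
              linarith
          _ = 2 * ((2*((m:ℝ)+1)+2) * δ' * B * B) := by ring
        have naMv : ‖(h * (1-h)).fst (v i j)‖ ≤ 2 * B := by
          have h9 := DC.norm_fst_apply_le (h * (1-h)) (v i j)
          have h10 := mul_le_mul haMn hnv (norm_nonneg _) (by norm_num)
          linarith
        have nq : ‖q‖ ≤ 2 * B := by
          have h5 := DC.norm_fst_apply_le (h ^ (m+1) * (1 - h)) (w i (j+1))
          have h6 := DCnorm_p_le hh1 (m+1)
          have h10 := mul_le_mul h6 hnw' (norm_nonneg _) (by norm_num)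
          rw [hqdef]
          linarith
        have ns0 : ‖s0‖ ≤ 2 * B + C0^(m+1) * δ' := by
          have h7 : ‖s0‖ ≤ ‖q‖ + ‖q - s0‖ := by
            have h8 := norm_sub_le q (q - s0)
            have h9 : q - (q - s0) = s0 := by abel
            rw [h9] at h8
            linarith
          linarith [hs0, nq]
        have hcv' : ‖(h * (1-h)).fst (v i j) - cv‖ ≤ δ' * B := by
          refine le_trans hcv ?_
          exact mul_le_mul_of_nonneg_left hnv hδ'pos.le
        have hP0 : (0:ℝ) ≤ C0^(m+1) * δ' := by
          have hcpos : (0:ℝ) < C0 := by linarith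
          exact mul_nonneg (pow_nonneg hcpos.le _) hδ'pos.le
        have n3 : ‖(h * (1-h)).fst (v i j) * (q - s0) + ((h * (1-h)).fst (v i j) - cv) * s0‖
            ≤ 2*B*(C0^(m+1)*δ') + (δ' * B) * (2*B + C0^(m+1)*δ') := by
          have t2 := norm_mul_le ((h * (1-h)).fst (v i j)) (q - s0)
          have t3 := norm_mul_le ((h * (1-h)).fst (v i j) - cv) s0
          have b1 : ‖(h * (1-h)).fst (v i j)‖ * ‖q - s0‖ ≤ 2*B*(C0^(m+1)*δ') :=
            mul_le_mul naMv hs0 (norm_nonneg _) (by linarith)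
          have b2 : ‖(h * (1-h)).fst (v i j) - cv‖ * ‖s0‖ ≤ (δ'*B)*(2*B + C0^(m+1)*δ') := by
            refine mul_le_mul hcv' ns0 (norm_nonneg _) (mul_nonneg hδ'pos.le hB0)
          calc ‖(h * (1-h)).fst (v i j) * (q - s0) + ((h * (1-h)).fst (v i j) - cv) * s0‖
              ≤ ‖(h * (1-h)).fst (v i j) * (q - s0)‖
                + ‖((h * (1-h)).fst (v i j) - cv) * s0‖ := norm_add_le _ _
          _ ≤ 2*B*(C0^(m+1)*δ') + (δ' * B) * (2*B + C0^(m+1)*δ') := by linarith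
        -- triangle inequality
        have tri : ‖((h ^ (m+2) * (1 - h)).fst (w i j) - s1)
              - (h * (1-h)).fst (cterm * w i (j+1))
              - ((h * (1-h)).fst (v i j) * (q - s0) + ((h * (1-h)).fst (v i j) - cv) * s0)‖
            ≤ C0^(m+2) * δ' + 2 * ((2*((m:ℝ)+1)+2) * δ' * B * B)
              + (2*B*(C0^(m+1)*δ') + (δ' * B) * (2*B + C0^(m+1)*δ')) := by
          have t1 := norm_sub_le (((h ^ (m+2) * (1 - h)).fst (w i j) - s1)
              - (h * (1-h)).fst (cterm * w i (j+1)))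
            ((h * (1-h)).fst (v i j) * (q - s0) + ((h * (1-h)).fst (v i j) - cv) * s0)
          have t2 := norm_sub_le ((h ^ (m+2) * (1 - h)).fst (w i j) - s1)
            ((h * (1-h)).fst (cterm * w i (j+1)))
          linarith [hs1, n2, n3]
        refine le_trans tri ?_
        -- numeric estimate
        have hP1 : (1:ℝ) ≤ C0^(m+1) := one_le_pow₀ hC01
        have hc2 : C0^(m+2) = C0^(m+1) * C0 := pow_succ C0 (m+1)
        have hc3 : C0^(m+3) = C0^(m+1) * C0 * C0 := by rw [← pow_succ, ← pow_succ]
        have hmN : (m:ℝ) + 3 ≤ (N:ℝ) := by exact_mod_cast (show m + 3 ≤ N by omega)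
        have hC0big : (4*(N:ℝ) + 4) * B^2 ≤ C0 := by rw [hC0]; nlinarith
        have hcoef : C0^(m+1)*C0 + (4*(m:ℝ)+8)*B^2 + 3*B*C0^(m+1) + 2*B^2
            ≤ C0^(m+1)*C0*C0 := by
          have hP0 : (0:ℝ) ≤ C0^(m+1) := by linarith
          have hC0pos : (0:ℝ) ≤ C0 := by linarith
          have k1 : (4*(m:ℝ)+8)*B^2 + 2*B^2 ≤ C0 := by
            have hint := mul_nonneg (show (0:ℝ) ≤ (N:ℝ) - (m:ℝ) - 3 by linarith) (sq_nonneg B)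
            have := sq_nonneg B
            nlinarith [hC0big]
          have k2 : 3*B*C0^(m+1) ≤ C0*C0^(m+1) :=
            mul_le_mul_of_nonneg_right hC03B hP0
          have k3 : C0 ≤ C0^(m+1)*C0 := by
            have := mul_le_mul_of_nonneg_right hP1 hC0pos
            linarith
          have k4 : 3*(C0^(m+1)*C0) ≤ C0^(m+1)*C0*C0 := by
            have h30 : (0:ℝ) ≤ C0^(m+1)*C0 := mul_nonneg hP0 hC0pos
            have h31 := mul_le_mul_of_nonneg_left hC03 h30
            linarith [h31]
          linarith [k1, k2, k3, k4]
        have hδδ : δ' * δ' ≤ δ' := by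
          have := mul_nonneg (show (0:ℝ) ≤ 1 - δ' by linarith) hδ'pos.le
          nlinarith [this]
        have hBP0 : (0:ℝ) ≤ B * C0^(m+1) := by
          have hP0 : (0:ℝ) ≤ C0^(m+1) := pow_nonneg (by linarith) _
          exact mul_nonneg hB0 hP0
        have hkey2 := mul_le_mul_of_nonneg_right hcoef hδ'pos.le
        have hkey3 := mul_le_mul_of_nonneg_left hδδ hBP0
        have e7 : C0^(m+1) * C0 * δ' + 2 * ((2*((m:ℝ)+1)+2) * δ' * B * B)
            + (2*B*(C0^(m+1)*δ') + (δ' * B) * (2*B + C0^(m+1)*δ'))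
            = (C0^(m+1)*C0 + (4*(m:ℝ)+8)*B^2 + 3*B*C0^(m+1) + 2*B^2) * δ'
              - B * C0^(m+1) * δ' + B * C0^(m+1) * (δ' * δ') := by ring
        rw [hc3, hc2, e7]
        have hkey3' : B * C0^(m+1) * (δ' * δ') ≤ B * C0^(m+1) * δ' := by
          rw [mul_assoc] at hkey3 ⊢
          exact hkey3
        linarith [hkey2, hkey3']
  -- conclusion for pₙ on X₀
  have MAIND : ∀ n : ℕ, 1 ≤ n → n ≤ N → ∀ x, x ∈ X₀ →
      EpsIn ((h ^ n * (1 - h)).fst x) (G * δ' * ‖x‖) ((C : Set A) ∩ (D : Set A)) := by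
    intro n hn1 hnN x hx
    set u : X₀ := ⟨x, hx⟩ with hu
    have hxu : x = ∑ i : Fin d, bas.repr u i • w i 0 := by
      have e1 : (u : A) = ∑ i : Fin d, bas.repr u i • ((bas i : X₀) : A) := by
        conv_lhs => rw [← bas.sum_repr u]
        push_cast
        rfl
      calc x = (u : A) := rfl
      _ = ∑ i : Fin d, bas.repr u i • ((bas i : X₀) : A) := e1
      _ = ∑ i : Fin d, bas.repr u i • w i 0 := by
          exact Finset.sum_congr rfl fun i _ => by rw [hw0 i]
    have heq : (h ^ n * (1 - h)).fst x
        = ∑ i : Fin d, bas.repr u i • (h ^ n * (1 - h)).fst (w i 0) := by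
      conv_lhs => rw [hxu]
      rw [map_sum]
      exact Finset.sum_congr rfl fun i _ => by rw [map_smul]
    rw [heq]
    have hterm : ∀ i : Fin d, i ∈ Finset.univ →
        EpsIn (bas.repr u i • (h ^ n * (1 - h)).fst (w i 0))
          (‖bas.repr u i‖ * (C0 ^ N * δ')) ((C : Set A) ∩ (D : Set A)) := by
      intro i _
      have hq := QD n i 0 hn1 hnN (by omega) (by omega)
      have hq2 : EpsIn ((h ^ n * (1 - h)).fst (w i 0)) (C0 ^ N * δ')
          ((C : Set A) ∩ (D : Set A)) := by
        apply hq.mono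
        have hpow : C0 ^ n ≤ C0 ^ N := pow_le_pow_right₀ hC01 hnN
        have := mul_le_mul_of_nonneg_right hpow hδ'pos.le
        linarith
      exact hq2.smul _ hSsmul
    have hsum := EpsIn.finset_sum Finset.univ _ _ hS0 hSadd hterm
    apply hsum.mono
    have hC0N0 : (0:ℝ) ≤ C0 ^ N * δ' := by
      have : (0:ℝ) < C0 := by linarith
      positivity
    have hbound : ∀ i : Fin d, i ∈ Finset.univ → ‖bas.repr u i‖ * (C0 ^ N * δ')
        ≤ Kc * ‖x‖ * (C0 ^ N * δ') := by
      intro i _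
      have h5 := hrepr u i
      have hux : ‖u‖ = ‖x‖ := rfl
      rw [hux] at h5
      exact mul_le_mul_of_nonneg_right h5 hC0N0
    calc ∑ i : Fin d, ‖bas.repr u i‖ * (C0 ^ N * δ')
        ≤ ∑ _i : Fin d, Kc * ‖x‖ * (C0 ^ N * δ') := Finset.sum_le_sum hbound
    _ = (d:ℝ) * (Kc * ‖x‖ * (C0 ^ N * δ')) := by
        rw [Finset.sum_const, Finset.card_univ, Fintype.card_fin, nsmul_eq_mul]
    _ = G * δ' * ‖x‖ := by rw [hG]; ring
  -- final assembly
  intro x hx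
  have hxX : x ∈ X := hX₀X x hx
  refine ⟨?_, ?_⟩
  · have h1 := (hmain x hxX).1
    have hδ'δ : δ' ≤ δ := by
      have h9 := mul_nonneg (show (0:ℝ) ≤ T - 1 by linarith) hδ'pos.le
      nlinarith [h9]
    have h2 : δ' * ‖x‖ ≤ δ * ‖x‖ := mul_le_mul_of_nonneg_right hδ'δ (norm_nonneg x)
    linarith
  intro n hn1 hnN
  have hGδ : G * δ' * ‖x‖ ≤ δ * ‖x‖ := by
    have h1 : G ≤ T := by rw [hT]; nlinarith [mul_nonneg hNr hG0]
    have h2 : G * δ' ≤ T * δ' := mul_le_mul_of_nonneg_right h1 hδ'pos.le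
    have h3 : G * δ' ≤ δ := by linarith
    have h4 := mul_le_mul_of_nonneg_right h3 (norm_nonneg x)
    linarith
  refine ⟨?_, ?_, ?_⟩
  · -- hⁿ x near C
    have htl := tele h n hn1
    have heq : (h ^ n).fst x = h.fst x - ∑ k ∈ Finset.Ico 1 n, (h ^ k * (1 - h)).fst x := by
      rw [htl, sub_fst_apply, fst_sum]
    have hfst : EpsIn (h.fst x) (δ' * ‖x‖) (C : Set A) := (hmain x hxX).2.1
    have hsum : EpsIn (∑ k ∈ Finset.Ico 1 n, (h ^ k * (1 - h)).fst x)
        (∑ _k ∈ Finset.Ico 1 n, G * δ' * ‖x‖) (C : Set A) := by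
      apply EpsIn.finset_sum _ _ _ hCs0 hCsadd
      intro k hk
      have hk1 := (Finset.mem_Ico.mp hk).1
      have hk2 : k ≤ N := by
        have := (Finset.mem_Ico.mp hk).2
        omega
      exact (MAIND k hk1 hk2 x hx).subset Set.inter_subset_left
    have hcomb := EpsIn.sub hCssub hfst hsum
    rw [← heq] at hcomb
    apply hcomb.mono
    rw [Finset.sum_const, Nat.card_Ico, nsmul_eq_mul]
    have hcard : ((n - 1 : ℕ) : ℝ) ≤ (N : ℝ) := by
      have : n - 1 ≤ N := by omega
      exact_mod_cast this
    have hGx : 0 ≤ G * δ' * ‖x‖ := by positivity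
    have h5 : ((n-1:ℕ):ℝ) * (G * δ' * ‖x‖) ≤ (N:ℝ) * (G * δ' * ‖x‖) :=
      mul_le_mul_of_nonneg_right hcard hGx
    have h6 : δ' * ‖x‖ + (N:ℝ) * (G * δ' * ‖x‖) ≤ δ * ‖x‖ := by
      have h7 : (1 + (N:ℝ) * G) ≤ T := by rw [hT]; nlinarith [mul_nonneg hNr hG0]
      have h8 : (1 + (N:ℝ) * G) * δ' ≤ T * δ' := mul_le_mul_of_nonneg_right h7 hδ'pos.le
      have h9 : (1 + (N:ℝ) * G) * δ' ≤ δ := by linarith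
      have h10 := mul_le_mul_of_nonneg_right h9 (norm_nonneg x)
      nlinarith [h10]
    linarith
  · exact ((MAIND n hn1 hnN x hx).subset Set.inter_subset_right).mono hGδ
  · exact (MAIND n hn1 hnN x hx).mono hGδ

end
end

section
/- For all c > 0 and ε > 0 there exists δ > 0 with the following property. Let A be a C*-algebra with unitization Ã, let X be a subspace of A, let n ≥ 1, and let {u_t}_{t∈[0,1]} be a norm-continuous path of invertible elements of Mₙ(Ã) with u₁ = 1ₙ, such that for each t both u_t and u_t⁻¹ are δ-in the set {1ₙ + x : x ∈ Mₙ(X)}, and ‖u_t‖ ≤ c and ‖u_t⁻¹‖ ≤ c for all t. Then there exist m ∈ ℕ and invertible elements a ∈ M_{mn}(Ã) and b ∈ M_{(m+1)n}(Ã), with a and a⁻¹ δ-in {1 + x : x ∈ M_{mn}(X)}, b and b⁻¹ δ-in {1 + x : x ∈ M_{(m+1)n}(X)}, all of norm at most c, such that the block matrix difference diag(u₀, 1_{(2m+1)n}) − diag(1ₙ, a, a⁻¹, 1ₙ)·diag(b, b⁻¹) in M_{2(m+1)n}(Ã) has norm at most ε. -/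
noncomputable section

attribute [local instance] Matrix.linftyOpNormedRing

/-- The subset `{1 + x : x ∈ M_ι(X)}` of the matrices over the unitization of `A`,
where `X ⊆ A`. -/
def OneAddMat {A : Type*} [NonUnitalNormedRing A] [StarRing A] [CStarRing A]
    [NormedSpace ℂ A] [IsScalarTower ℂ A A] [SMulCommClass ℂ A A]
    [CompleteSpace A] [StarModule ℂ A]
    {ι : Type} [Fintype ι] [DecidableEq ι] (X : Set A) :
    Set (Matrix ι ι (Unitization ℂ A)) :=
  {M | ∃ x : Matrix ι ι A, (∀ i j, x i j ∈ X) ∧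
    M = 1 + x.map (Unitization.inr : A → Unitization ℂ A)}

/-- The block diagonal matrix `diag(u₀, 1_{(2m+1)n})` in `M_{2(m+1)n}`. -/
def blockDiagOne {R : Type*} [Semiring R] (n m : ℕ) (u₀ : Matrix (Fin n) (Fin n) R) :
    Matrix (Fin (2 * (m + 1) * n)) (Fin (2 * (m + 1) * n)) R :=
  Matrix.reindex (finSumFinEquiv.trans (finCongr (by ring)))
    (finSumFinEquiv.trans (finCongr (by ring)))
    (Matrix.fromBlocks u₀ 0 0
      (1 : Matrix (Fin ((2 * m + 1) * n)) (Fin ((2 * m + 1) * n)) R))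

/-- The block diagonal matrix `diag(1ₙ, a, a', 1ₙ)` in `M_{2(m+1)n}`. -/
def blockDiagTwo {R : Type*} [Semiring R] (n m : ℕ)
    (a a' : Matrix (Fin (m * n)) (Fin (m * n)) R) :
    Matrix (Fin (2 * (m + 1) * n)) (Fin (2 * (m + 1) * n)) R :=
  Matrix.reindex
    (((finSumFinEquiv.sumCongr finSumFinEquiv).trans finSumFinEquiv).trans
      (finCongr (by ring)))
    (((finSumFinEquiv.sumCongr finSumFinEquiv).trans finSumFinEquiv).trans
      (finCongr (by ring)))
    (Matrix.fromBlocks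
      (Matrix.fromBlocks (1 : Matrix (Fin n) (Fin n) R) 0 0 a) 0 0
      (Matrix.fromBlocks a' 0 0 (1 : Matrix (Fin n) (Fin n) R)))

/-- The block diagonal matrix `diag(b, b')` in `M_{2(m+1)n}`. -/
def blockDiagThree {R : Type*} [Semiring R] (n m : ℕ)
    (b b' : Matrix (Fin ((m + 1) * n)) (Fin ((m + 1) * n)) R) :
    Matrix (Fin (2 * (m + 1) * n)) (Fin (2 * (m + 1) * n)) R :=
  Matrix.reindex (finSumFinEquiv.trans (finCongr (by ring)))
    (finSumFinEquiv.trans (finCongr (by ring)))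
    (Matrix.fromBlocks b 0 0 b')

namespace Lem55

attribute [local instance] Matrix.linftyOpSeminormedAddCommGroup


open Matrix

/-! ### Norm lemmas for the `L∞`-operator norm -/

section NormLemmas
variable {α : Type*} [SeminormedAddCommGroup α]

lemma row_sum_le_norm {m n : Type*} [Fintype m] [Fintype n] (M : Matrix m n α) (i : m) :
    ∑ j, ‖M i j‖ ≤ ‖M‖ := by
  have h1 : (∑ j, ‖M i j‖₊) ≤ ‖M‖₊ := by
    rw [Matrix.linfty_opNNNorm_def]
    exact Finset.le_sup (f := fun i => ∑ j, ‖M i j‖₊) (Finset.mem_univ i)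
  have := NNReal.coe_le_coe.mpr h1
  push_cast at this
  simpa using this

lemma norm_le_of_rows {m n : Type*} [Fintype m] [Fintype n] (M : Matrix m n α) {r : ℝ}
    (hr : 0 ≤ r) (h : ∀ i, ∑ j, ‖M i j‖ ≤ r) : ‖M‖ ≤ r := by
  have h2 : ‖M‖₊ ≤ ⟨r, hr⟩ := by
    rw [Matrix.linfty_opNNNorm_def]
    refine Finset.sup_le fun i _ => ?_
    apply NNReal.coe_le_coe.mp
    push_cast
    exact h i
  exact NNReal.coe_le_coe.mpr h2

lemma norm_submatrix_equiv {m n m' n' : Type*} [Fintype m] [Fintype n] [Fintype m'] [Fintype n']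
    (M : Matrix m n α) (e₁ : m' ≃ m) (e₂ : n' ≃ n) :
    ‖M.submatrix e₁ e₂‖ = ‖M‖ := by
  have hrow : ∀ i : m', (∑ j : n', ‖M.submatrix e₁ e₂ i j‖₊) = ∑ j : n, ‖M (e₁ i) j‖₊ := fun i =>
    Fintype.sum_equiv e₂ _ _ (fun j => rfl)
  have : ‖M.submatrix e₁ e₂‖₊ = ‖M‖₊ := by
    rw [Matrix.linfty_opNNNorm_def, Matrix.linfty_opNNNorm_def]
    apply le_antisymm
    · refine Finset.sup_le fun i _ => ?_
      rw [hrow]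
      exact Finset.le_sup (f := fun i => ∑ j, ‖M i j‖₊) (Finset.mem_univ (e₁ i))
    · refine Finset.sup_le fun i _ => ?_
      calc ∑ j : n, ‖M i j‖₊
          = ∑ j : n', ‖M.submatrix e₁ e₂ (e₁.symm i) j‖₊ := by
            rw [hrow, Equiv.apply_symm_apply]
        _ ≤ _ := Finset.le_sup (f := fun i => ∑ j : n', ‖M.submatrix e₁ e₂ i j‖₊)
            (Finset.mem_univ _)
  calc ‖M.submatrix e₁ e₂‖ = (‖M.submatrix e₁ e₂‖₊ : ℝ) := rfl
    _ = ‖M‖ := by rw [this]; rfl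

lemma norm_reindex {m n m' n' : Type*} [Fintype m] [Fintype n] [Fintype m'] [Fintype n']
    (M : Matrix m n α) (e₁ : m ≃ m') (e₂ : n ≃ n') :
    ‖Matrix.reindex e₁ e₂ M‖ = ‖M‖ :=
  norm_submatrix_equiv M e₁.symm e₂.symm

lemma norm_fromBlocks_le {m n : Type*} [Fintype m] [Fintype n] [DecidableEq m] [DecidableEq n]
    (A : Matrix m m α) (D : Matrix n n α) :
    ‖Matrix.fromBlocks A 0 0 D‖ ≤ max ‖A‖ ‖D‖ := by
  refine norm_le_of_rows _ (le_max_iff.2 (Or.inl (norm_nonneg _))) fun i => ?_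
  cases i with
  | inl i =>
    calc ∑ j, ‖Matrix.fromBlocks A 0 0 D (Sum.inl i) j‖
        = ∑ j : m, ‖A i j‖ := by simp [Fintype.sum_sum_type]
      _ ≤ ‖A‖ := row_sum_le_norm A i
      _ ≤ _ := le_max_left _ _
  | inr i =>
    calc ∑ j, ‖Matrix.fromBlocks A 0 0 D (Sum.inr i) j‖
        = ∑ j : n, ‖D i j‖ := by simp [Fintype.sum_sum_type]
      _ ≤ ‖D‖ := row_sum_le_norm D i
      _ ≤ _ := le_max_right _ _

end NormLemmas

/-! ### Reindexing equivalences and block-matrix algebra -/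

def ccF (n k : ℕ) : Fin n ⊕ Fin (k * n) ≃ Fin ((k + 1) * n) :=
  finSumFinEquiv.trans (finCongr (by ring))

def ccG (n k : ℕ) : Fin (k * n) ⊕ Fin n ≃ Fin ((k + 1) * n) :=
  finSumFinEquiv.trans (finCongr (by ring))

def EE (n m : ℕ) : Fin ((m + 1) * n) ⊕ Fin ((m + 1) * n) ≃ Fin (2 * (m + 1) * n) :=
  finSumFinEquiv.trans (finCongr (by ring))

def JJ (n m : ℕ) : Fin (m * n) ⊕ Fin ((m + 1) * n) ≃ Fin ((2 * m + 1) * n) :=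
  finSumFinEquiv.trans (finCongr (by ring))

variable {α : Type*}

lemma reindex_reindex {l m l' m' n' o' : Type*} (e₁ : l ≃ l') (e₂ : m ≃ m')
    (f₁ : l' ≃ n') (f₂ : m' ≃ o') (M : Matrix l m α) :
    Matrix.reindex f₁ f₂ (Matrix.reindex e₁ e₂ M) =
      Matrix.reindex (e₁.trans f₁) (e₂.trans f₂) M := by
  simp [Matrix.reindex_apply, Matrix.submatrix_submatrix]

lemma reindex_mul [NonUnitalNonAssocSemiring α] {m n : Type*} [Fintype m] [Fintype n]
    (e : m ≃ n) (M N : Matrix m m α) :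
    Matrix.reindex e e M * Matrix.reindex e e N = Matrix.reindex e e (M * N) := by
  rw [Matrix.reindex_apply, Matrix.reindex_apply, Matrix.reindex_apply,
    Matrix.submatrix_mul_equiv]

lemma reindex_add [Add α] {m n m' n' : Type*} (e₁ : m ≃ m') (e₂ : n ≃ n')
    (M N : Matrix m n α) :
    Matrix.reindex e₁ e₂ M + Matrix.reindex e₁ e₂ N = Matrix.reindex e₁ e₂ (M + N) := by
  ext i j; simp

lemma reindex_one {m m' : Type*} [Zero α] [One α] [DecidableEq m] [DecidableEq m']
    (e : m ≃ m') : Matrix.reindex e e (1 : Matrix m m α) = 1 := by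
  rw [Matrix.reindex_apply, Matrix.submatrix_one_equiv]

lemma reindex_sub [Sub α] {m n m' n' : Type*} (e₁ : m ≃ m') (e₂ : n ≃ n')
    (M N : Matrix m n α) :
    Matrix.reindex e₁ e₂ M - Matrix.reindex e₁ e₂ N = Matrix.reindex e₁ e₂ (M - N) := by
  ext i j; simp

lemma fromBlocks_sub00 [SubtractionMonoid α] {m n : Type*}
    (A A' : Matrix m m α) (D D' : Matrix n n α) :
    Matrix.fromBlocks A 0 0 D - Matrix.fromBlocks A' 0 0 D' =
      Matrix.fromBlocks (A - A') 0 0 (D - D') := by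
  ext i j; rcases i with i | i <;> rcases j with j | j <;> simp

lemma fromBlocks_reindex {m n m' n' : Type*} [Zero α]
    (e₁ : m ≃ m') (e₂ : n ≃ n') (A : Matrix m m α) (D : Matrix n n α) :
    Matrix.fromBlocks (Matrix.reindex e₁ e₁ A) 0 0 (Matrix.reindex e₂ e₂ D) =
      Matrix.reindex (e₁.sumCongr e₂) (e₁.sumCongr e₂) (Matrix.fromBlocks A 0 0 D) := by
  ext i j
  rcases i with i | i <;> rcases j with j | j <;>
    simp [Matrix.reindex_apply, Matrix.submatrix_apply, Equiv.sumCongr_symm,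
      Equiv.sumCongr_apply]

lemma fromBlocks_assoc {m n o : Type*} [Zero α]
    (A : Matrix m m α) (B : Matrix n n α) (C : Matrix o o α) :
    Matrix.fromBlocks A 0 0 (Matrix.fromBlocks B 0 0 C) =
      Matrix.reindex (Equiv.sumAssoc m n o) (Equiv.sumAssoc m n o)
        (Matrix.fromBlocks (Matrix.fromBlocks A 0 0 B) 0 0 C) := by
  ext i j
  rcases i with i | i | i <;> rcases j with j | j | j <;>
    simp [Matrix.reindex_apply, Matrix.submatrix_apply, Equiv.sumAssoc]

lemma fromBlocks_assoc' {m n o : Type*} [Zero α]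
    (A : Matrix m m α) (B : Matrix n n α) (C : Matrix o o α) :
    Matrix.fromBlocks (Matrix.fromBlocks A 0 0 B) 0 0 C =
      Matrix.reindex (Equiv.sumAssoc m n o).symm (Equiv.sumAssoc m n o).symm
        (Matrix.fromBlocks A 0 0 (Matrix.fromBlocks B 0 0 C)) := by
  conv_rhs => rw [fromBlocks_assoc, reindex_reindex, Equiv.self_trans_symm,
    Matrix.reindex_refl_refl]

lemma equiv_assoc (n k : ℕ) :
    (Equiv.sumAssoc (Fin n) (Fin (k * n)) (Fin n)).trans
      (((Equiv.refl (Fin n)).sumCongr (ccG n k)).trans (ccF n (k + 1))) =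
    ((ccF n k).sumCongr (Equiv.refl (Fin n))).trans (ccG n (k + 1)) := by
  apply Equiv.ext
  rintro ((x | x) | x) <;>
    apply Fin.ext <;>
    simp [ccF, ccG, Equiv.sumAssoc, finCongr, Fin.ext_iff] <;>
    ring

lemma equiv_one (n m : ℕ) (h₁ : n + (2 * m + 1) * n = 2 * (m + 1) * n) :
    ((Equiv.refl (Fin n)).sumCongr (JJ n m)).trans (finSumFinEquiv.trans (finCongr h₁)) =
    (Equiv.sumAssoc (Fin n) (Fin (m * n)) (Fin ((m + 1) * n))).symm.trans
      (((ccF n m).sumCongr (Equiv.refl (Fin ((m + 1) * n)))).trans (EE n m)) := by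
  apply Equiv.ext
  rintro (x | (x | x)) <;>
    apply Fin.ext <;>
    simp [ccF, JJ, EE, Equiv.sumAssoc, finCongr, Fin.ext_iff] <;>
    ring

lemma equiv_two (n m : ℕ)
    (h₂ : n + m * n + (m * n + n) = 2 * (m + 1) * n) :
    ((ccF n m).sumCongr (ccG n m)).trans (EE n m) =
    ((finSumFinEquiv.sumCongr finSumFinEquiv).trans finSumFinEquiv).trans (finCongr h₂) := by
  apply Equiv.ext
  rintro ((x | x) | (x | x)) <;>
    apply Fin.ext <;>
    simp [ccF, ccG, EE, finCongr, Fin.ext_iff] <;>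
    ring

/-! ### Concatenation of square blocks -/

/-- Concatenation of `k` square blocks of size `n` into a matrix of size `k * n`. -/
def cc [Zero α] (n : ℕ) : (k : ℕ) → (Fin k → Matrix (Fin n) (Fin n) α) →
    Matrix (Fin (k * n)) (Fin (k * n)) α
  | 0, _ => 0
  | k + 1, v => Matrix.reindex (ccF n k) (ccF n k)
      (Matrix.fromBlocks (v 0) 0 0 (cc n k fun i => v i.succ))

lemma matrix_zero_mul_eq [Zero α] {n : ℕ} (M N : Matrix (Fin (0 * n)) (Fin (0 * n)) α) :
    M = N := by
  ext i j
  exact absurd i.isLt (by omega)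

lemma cc_one [Zero α] [One α] : ∀ (n k : ℕ), cc (α := α) n k (fun _ => 1) = 1 := by
  intro n k
  induction k with
  | zero => exact matrix_zero_mul_eq _ _
  | succ k ih =>
    rw [cc, ih, Matrix.fromBlocks_one, Matrix.reindex_apply, Matrix.submatrix_one_equiv]

lemma cc_mul [NonUnitalNonAssocSemiring α] (n k : ℕ)
    (v w : Fin k → Matrix (Fin n) (Fin n) α) :
    cc n k v * cc n k w = cc n k (fun i => v i * w i) := by
  induction k with
  | zero => exact matrix_zero_mul_eq _ _
  | succ k ih =>
    rw [cc, cc, cc, Matrix.reindex_apply, Matrix.reindex_apply, Matrix.reindex_apply,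
      Matrix.submatrix_mul_equiv, Matrix.fromBlocks_multiply]
    simp only [Matrix.zero_mul, Matrix.mul_zero, add_zero, zero_add]
    rw [ih]

lemma cc_sub [SubtractionMonoid α] (n k : ℕ) (v w : Fin k → Matrix (Fin n) (Fin n) α) :
    cc n k v - cc n k w = cc n k (fun i => v i - w i) := by
  induction k with
  | zero => exact matrix_zero_mul_eq _ _
  | succ k ih =>
    rw [cc, cc, cc, reindex_sub, fromBlocks_sub00, ih]

lemma ccF_symm_apply_left {n k : ℕ} (i : Fin ((k + 1) * n)) (h : i.val < n) :
    (ccF n k).symm i = Sum.inl ⟨i.val, h⟩ := by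
  rw [Equiv.symm_apply_eq]
  apply Fin.ext
  simp [ccF]

lemma ccG_symm_apply_right {n k : ℕ} (i : Fin ((k + 1) * n)) (h : k * n ≤ i.val) :
    (ccG n k).symm i = Sum.inr ⟨i.val - k * n, by
      have h1 := i.isLt
      have h2 : (k + 1) * n = k * n + n := Nat.succ_mul k n
      omega⟩ := by
  rw [Equiv.symm_apply_eq]
  apply Fin.ext
  simp [ccG]
  omega

lemma snoc_assoc [Zero α] (n k : ℕ) (A : Matrix (Fin n) (Fin n) α)
    (B : Matrix (Fin (k * n)) (Fin (k * n)) α) (C : Matrix (Fin n) (Fin n) α) :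
    Matrix.reindex (ccF n (k + 1)) (ccF n (k + 1))
      (Matrix.fromBlocks A 0 0
        (Matrix.reindex (ccG n k) (ccG n k) (Matrix.fromBlocks B 0 0 C))) =
    Matrix.reindex (ccG n (k + 1)) (ccG n (k + 1))
      (Matrix.fromBlocks
        (Matrix.reindex (ccF n k) (ccF n k) (Matrix.fromBlocks A 0 0 B)) 0 0 C) := by
  conv_lhs => rw [← Matrix.reindex_refl_refl A, fromBlocks_reindex, fromBlocks_assoc,
    reindex_reindex, reindex_reindex, equiv_assoc]
  conv_rhs => rw [← Matrix.reindex_refl_refl C, fromBlocks_reindex, reindex_reindex]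

lemma cc_snoc [Zero α] (n : ℕ) : ∀ (k : ℕ) (v : Fin (k + 1) → Matrix (Fin n) (Fin n) α),
    cc n (k + 1) v = Matrix.reindex (ccG n k) (ccG n k)
      (Matrix.fromBlocks (cc n k fun i => v i.castSucc) 0 0 (v (Fin.last k))) := by
  intro k
  induction k with
  | zero =>
    intro v
    conv_lhs => rw [cc]
    ext i j
    have hi : i.val < n := by have := i.isLt; omega
    have hj : j.val < n := by have := j.isLt; omega
    rw [Matrix.reindex_apply, Matrix.reindex_apply, Matrix.submatrix_apply,
      Matrix.submatrix_apply, ccF_symm_apply_left i hi, ccF_symm_apply_left j hj,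
      ccG_symm_apply_right i (by omega), ccG_symm_apply_right j (by omega)]
    simp only [Matrix.fromBlocks_apply₁₁, Matrix.fromBlocks_apply₂₂, Nat.zero_mul,
      Nat.sub_zero]
    rfl
  | succ k ih =>
    intro v
    conv_lhs => rw [cc]
    rw [ih (fun i => v i.succ)]
    conv_rhs => rw [cc]
    have htail : (fun i : Fin k => v (i.succ).castSucc) = (fun i => v (i.castSucc).succ) :=
      funext fun i => congrArg v (Fin.succ_castSucc i).symm
    rw [htail, Fin.succ_last, Fin.castSucc_zero, snoc_assoc]

lemma cc_norm {α : Type*} [SeminormedAddCommGroup α] (n k : ℕ)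
    (v : Fin k → Matrix (Fin n) (Fin n) α) {r : ℝ} (hr : 0 ≤ r)
    (h : ∀ i, ‖v i‖ ≤ r) : ‖cc n k v‖ ≤ r := by
  induction k with
  | zero => rw [cc, norm_zero]; exact hr
  | succ k ih =>
    rw [cc, norm_reindex]
    refine le_trans (norm_fromBlocks_le _ _) (max_le (h 0) (ih _ fun i => h i.succ))

/-- Concatenation of invertible blocks, as a unit. -/
def ccUnit {R : Type*} [Semiring R] (n k : ℕ) (v : Fin k → (Matrix (Fin n) (Fin n) R)ˣ) :
    (Matrix (Fin (k * n)) (Fin (k * n)) R)ˣ where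
  val := cc n k fun i => (v i).val
  inv := cc n k fun i => ((v i)⁻¹).val
  val_inv := by
    rw [cc_mul]
    have : (fun i => (v i).val * ((v i)⁻¹).val) =
        (fun _ => (1 : Matrix (Fin n) (Fin n) R)) := funext fun i => Units.mul_inv (v i)
    rw [this, cc_one]
  inv_val := by
    rw [cc_mul]
    have : (fun i => ((v i)⁻¹).val * (v i).val) =
        (fun _ => (1 : Matrix (Fin n) (Fin n) R)) := funext fun i => Units.inv_mul (v i)
    rw [this, cc_one]

/-! ### Block-diagonal decompositions of the statement's matrices -/

lemma blockDiagOne_eq [Semiring α] (n m : ℕ) (u₀ : Matrix (Fin n) (Fin n) α) :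
    blockDiagOne n m u₀ = Matrix.reindex (EE n m) (EE n m)
      (Matrix.fromBlocks
        (Matrix.reindex (ccF n m) (ccF n m)
          (Matrix.fromBlocks u₀ 0 0 (1 : Matrix (Fin (m * n)) (Fin (m * n)) α))) 0 0
        (1 : Matrix (Fin ((m + 1) * n)) (Fin ((m + 1) * n)) α)) := by
  rw [blockDiagOne]
  rw [show (1 : Matrix (Fin ((2 * m + 1) * n)) (Fin ((2 * m + 1) * n)) α) =
      Matrix.reindex (JJ n m) (JJ n m) 1 from (Matrix.submatrix_one_equiv (JJ n m).symm).symm]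
  conv_lhs => rw [← Matrix.reindex_refl_refl u₀, fromBlocks_reindex, reindex_reindex,
    equiv_one]
  conv_rhs => rw [← Matrix.reindex_refl_refl
      (1 : Matrix (Fin ((m + 1) * n)) (Fin ((m + 1) * n)) α),
    fromBlocks_reindex, reindex_reindex, fromBlocks_assoc', reindex_reindex,
    Matrix.fromBlocks_one]

lemma blockDiagTwo_eq [Semiring α] (n m : ℕ) (a a' : Matrix (Fin (m * n)) (Fin (m * n)) α) :
    blockDiagTwo n m a a' = Matrix.reindex (EE n m) (EE n m)
      (Matrix.fromBlocks
        (Matrix.reindex (ccF n m) (ccF n m) (Matrix.fromBlocks 1 0 0 a)) 0 0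
        (Matrix.reindex (ccG n m) (ccG n m) (Matrix.fromBlocks a' 0 0 1))) := by
  rw [blockDiagTwo]
  conv_rhs => rw [fromBlocks_reindex, reindex_reindex, equiv_two n m (by ring)]

end Lem55
namespace Lem55

open Matrix

section OneAdd

variable {A : Type} [NonUnitalNormedRing A] [StarRing A] [CStarRing A]
    [NormedSpace ℂ A] [IsScalarTower ℂ A A] [SMulCommClass ℂ A A]
    [CompleteSpace A] [StarModule ℂ A] (X : Set A)

lemma epsIn_oneAddMat_reindex {ι κ : Type} [Fintype ι] [DecidableEq ι]
    [Fintype κ] [DecidableEq κ] (e : ι ≃ κ) {δ : ℝ}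
    {M : Matrix ι ι (Unitization ℂ A)} (h : EpsIn M δ (OneAddMat X)) :
    EpsIn (Matrix.reindex e e M) δ (OneAddMat X) := by
  obtain ⟨s, ⟨x, hx, rfl⟩, hns⟩ := h
  refine ⟨Matrix.reindex e e (1 + x.map (Unitization.inr : A → Unitization ℂ A)),
    ⟨Matrix.reindex e e x, fun i j => hx _ _, ?_⟩, ?_⟩
  · rw [← reindex_add, reindex_one, Matrix.reindex_apply, Matrix.reindex_apply,
      Matrix.submatrix_map]
  · rw [reindex_sub, norm_reindex]
    exact hns

lemma epsIn_oneAddMat_fromBlocks {ι κ : Type} [Fintype ι] [DecidableEq ι]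
    [Fintype κ] [DecidableEq κ] (h0 : (0 : A) ∈ X) {δ : ℝ}
    {M : Matrix ι ι (Unitization ℂ A)} {N : Matrix κ κ (Unitization ℂ A)}
    (hM : EpsIn M δ (OneAddMat X)) (hN : EpsIn N δ (OneAddMat X)) :
    EpsIn (Matrix.fromBlocks M 0 0 N) δ (OneAddMat X) := by
  obtain ⟨s, ⟨x, hx, rfl⟩, hns⟩ := hM
  obtain ⟨s', ⟨y, hy, rfl⟩, hns'⟩ := hN
  refine ⟨Matrix.fromBlocks (1 + x.map (Unitization.inr : A → Unitization ℂ A)) 0 0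
      (1 + y.map (Unitization.inr : A → Unitization ℂ A)),
    ⟨Matrix.fromBlocks x 0 0 y, ?_, ?_⟩, ?_⟩
  · rintro (i | i) (j | j) <;> simp [hx, hy, h0]
  · conv_rhs => rw [Matrix.fromBlocks_map, ← Matrix.fromBlocks_one, Matrix.fromBlocks_add]
    have : ((0 : Matrix ι κ A).map (Unitization.inr : A → Unitization ℂ A)) = 0 :=
      Matrix.map_zero _ (Unitization.inr_zero ℂ)
    rw [this]
    have : ((0 : Matrix κ ι A).map (Unitization.inr : A → Unitization ℂ A)) = 0 :=
      Matrix.map_zero _ (Unitization.inr_zero ℂ)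
    rw [this]
    simp only [add_zero]
  · rw [fromBlocks_sub00]
    exact le_trans (norm_fromBlocks_le _ _) (max_le hns hns')

lemma epsIn_oneAddMat_cc (h0 : (0 : A) ∈ X) {δ : ℝ} (hδ : 0 ≤ δ) (n k : ℕ)
    (v : Fin k → Matrix (Fin n) (Fin n) (Unitization ℂ A))
    (h : ∀ i, EpsIn (v i) δ (OneAddMat X)) :
    EpsIn (cc n k v) δ (OneAddMat X) := by
  induction k with
  | zero =>
    refine ⟨1, ⟨0, fun i j => by simpa using h0, by rw [Matrix.map_zero _ (Unitization.inr_zero ℂ), add_zero]⟩, ?_⟩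
    rw [matrix_zero_mul_eq (cc n 0 v - 1) 0, norm_zero]
    exact hδ
  | succ k ih =>
    rw [cc]
    exact epsIn_oneAddMat_reindex X _
      (epsIn_oneAddMat_fromBlocks X h0 (h 0) (ih _ fun i => h i.succ))

end OneAdd

end Lem55

open Matrix Lem55
/-- Lemma 5.5 ('hom to alg'): for all `c, ε > 0` there is `δ > 0` such that for any
C*-algebra `A`, subspace `X ⊆ A`, and norm-continuous path `{u_t}_{t∈[0,1]}` of invertibles
in `Mₙ(Ã)` with `u₁ = 1`, each `u_t` and `u_t⁻¹` being `δ`-in `{1 + x : x ∈ Mₙ(X)}` and of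
norm at most `c`, there exist `m ∈ ℕ` and invertibles `a ∈ M_{mn}(Ã)`, `b ∈ M_{(m+1)n}(Ã)`
(with `a, a⁻¹, b, b⁻¹` `δ`-in the corresponding sets `{1 + x}` and of norm at most `c`)
such that `‖diag(u₀, 1_{(2m+1)n}) − diag(1ₙ, a, a⁻¹, 1ₙ)·diag(b, b⁻¹)‖ ≤ ε` in
`M_{2(m+1)n}(Ã)`. -/
theorem stmt_12 (c ε : ℝ) (hc : 0 < c) (hε : 0 < ε) :
    ∃ δ > (0 : ℝ),
      ∀ (A : Type) [NonUnitalNormedRing A] [StarRing A] [CStarRing A]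
        [NormedSpace ℂ A] [IsScalarTower ℂ A A] [SMulCommClass ℂ A A]
        [CompleteSpace A] [StarModule ℂ A],
      ∀ (X : Submodule ℂ A) (n : ℕ), 1 ≤ n →
      ∀ u : ℝ → (Matrix (Fin n) (Fin n) (Unitization ℂ A))ˣ,
        ContinuousOn (fun t => (u t).val) (Set.Icc 0 1) →
        u 1 = 1 →
        (∀ t ∈ Set.Icc (0 : ℝ) 1,
          EpsIn (u t).val δ (OneAddMat (X : Set A)) ∧
          EpsIn ((u t)⁻¹).val δ (OneAddMat (X : Set A)) ∧
          ‖(u t).val‖ ≤ c ∧ ‖((u t)⁻¹).val‖ ≤ c) →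
        ∃ (m : ℕ) (a : (Matrix (Fin (m * n)) (Fin (m * n)) (Unitization ℂ A))ˣ)
          (b : (Matrix (Fin ((m + 1) * n)) (Fin ((m + 1) * n)) (Unitization ℂ A))ˣ),
          EpsIn a.val δ (OneAddMat (X : Set A)) ∧
          EpsIn (a⁻¹).val δ (OneAddMat (X : Set A)) ∧
          EpsIn b.val δ (OneAddMat (X : Set A)) ∧
          EpsIn (b⁻¹).val δ (OneAddMat (X : Set A)) ∧
          ‖a.val‖ ≤ c ∧ ‖(a⁻¹).val‖ ≤ c ∧ ‖b.val‖ ≤ c ∧ ‖(b⁻¹).val‖ ≤ c ∧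
          ‖blockDiagOne n m (u 0).val -
              blockDiagTwo n m a.val (a⁻¹).val * blockDiagThree n m b.val (b⁻¹).val‖
            ≤ ε := by
  refine ⟨1, one_pos, ?_⟩
  intro A _ _ _ _ _ _ _ _ X n hn u hu hu1 hbound
  -- uniform continuity
  have hunif := (isCompact_Icc : IsCompact (Set.Icc (0:ℝ) 1)).uniformContinuousOn_of_continuous hu
  replace hunif := Metric.uniformContinuousOn_iff.mp hunif
  obtain ⟨d, hd, hdd⟩ := hunif (ε / c) (by positivity)
  set m : ℕ := ⌈1 / d⌉₊ + 1 with hm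
  have hm0 : (0 : ℝ) < m := by positivity
  have hmd : 1 / (m : ℝ) < d := by
    rw [div_lt_iff₀ hm0] at *
    have h1 : (1 : ℝ) / d < m :=
      lt_of_le_of_lt (Nat.le_ceil _) (by exact_mod_cast Nat.lt_succ_self _)
    nlinarith [(div_lt_iff₀ hd).mp h1]
  -- the grid
  set t : Fin (m + 1) → ℝ := fun i => (i : ℝ) / m with ht
  have htmem : ∀ i, t i ∈ Set.Icc (0 : ℝ) 1 := fun i =>
    ⟨by positivity, by
      rw [div_le_one hm0]
      exact_mod_cast Fin.is_le i⟩
  have ht0 : t 0 = 0 := by simp [ht]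
  have htlast : t (Fin.last m) = 1 := by
    simp only [ht, Fin.val_last]
    exact div_self (ne_of_gt hm0)
  -- the units
  set va : Fin m → (Matrix (Fin n) (Fin n) (Unitization ℂ A))ˣ :=
    fun i => (u (t i.succ))⁻¹ with hva
  set vb : Fin (m + 1) → (Matrix (Fin n) (Fin n) (Unitization ℂ A))ˣ :=
    fun i => u (t i) with hvb
  set a := ccUnit n m va with ha
  set b := ccUnit n (m + 1) vb with hb
  have haval : a.val = cc n m fun i => (va i).val := rfl
  have hainv : (a⁻¹).val = cc n m fun i => ((va i)⁻¹).val := rfl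
  have hbval : b.val = cc n (m + 1) fun i => (vb i).val := rfl
  have hbinv : (b⁻¹).val = cc n (m + 1) fun i => ((vb i)⁻¹).val := rfl
  have h0X : (0 : A) ∈ (X : Set A) := X.zero_mem
  refine ⟨m, a, b, ?_, ?_, ?_, ?_, ?_, ?_, ?_, ?_, ?_⟩
  · rw [haval]
    exact epsIn_oneAddMat_cc _ h0X zero_le_one n m _
      fun i => (hbound _ (htmem i.succ)).2.1
  · rw [hainv]
    refine epsIn_oneAddMat_cc _ h0X zero_le_one n m _ fun i => ?_
    have : (va i)⁻¹ = u (t i.succ) := inv_inv _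
    rw [this]
    exact (hbound _ (htmem i.succ)).1
  · rw [hbval]
    exact epsIn_oneAddMat_cc _ h0X zero_le_one n (m + 1) _
      fun i => (hbound _ (htmem i)).1
  · rw [hbinv]
    exact epsIn_oneAddMat_cc _ h0X zero_le_one n (m + 1) _
      fun i => (hbound _ (htmem i)).2.1
  · rw [haval]
    exact cc_norm n m _ hc.le fun i => (hbound _ (htmem i.succ)).2.2.2
  · rw [hainv]
    refine cc_norm n m _ hc.le fun i => ?_
    have : (va i)⁻¹ = u (t i.succ) := inv_inv _
    rw [this]
    exact (hbound _ (htmem i.succ)).2.2.1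
  · rw [hbval]
    exact cc_norm n (m + 1) _ hc.le fun i => (hbound _ (htmem i)).2.2.1
  · rw [hbinv]
    exact cc_norm n (m + 1) _ hc.le fun i => (hbound _ (htmem i)).2.2.2
  -- the norm estimate
  · have hthree : blockDiagThree n m b.val (b⁻¹).val =
        Matrix.reindex (EE n m) (EE n m) (Matrix.fromBlocks b.val 0 0 (b⁻¹).val) := rfl
    have hP : Matrix.reindex (ccF n m) (ccF n m)
        (Matrix.fromBlocks 1 0 0 a.val) =
        cc n (m + 1) (Fin.cons 1 fun i => (va i).val) := by
      conv_rhs => rw [cc]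
      simp only [Fin.cons_zero, Fin.cons_succ]
      rfl
    have hQ : Matrix.reindex (ccG n m) (ccG n m)
        (Matrix.fromBlocks (a⁻¹).val 0 0 1) =
        cc n (m + 1) (Fin.snoc (fun i => ((va i)⁻¹).val) 1) := by
      conv_rhs => rw [cc_snoc]
      simp only [Fin.snoc_castSucc, Fin.snoc_last]
      rfl
    have hU : Matrix.reindex (ccF n m) (ccF n m)
        (Matrix.fromBlocks (u 0).val 0 0 1) =
        cc n (m + 1) (Fin.cons (u 0).val fun _ => 1) := by
      conv_rhs => rw [cc]
      simp only [Fin.cons_zero, Fin.cons_succ, cc_one]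
    rw [blockDiagOne_eq, blockDiagTwo_eq, hthree, hP, hQ, hU, reindex_mul,
      Matrix.fromBlocks_multiply]
    simp only [Matrix.zero_mul, Matrix.mul_zero, add_zero, zero_add]
    rw [hbval, hbinv, cc_mul, cc_mul]
    have htop : (fun i => Fin.cons (1 : Matrix (Fin n) (Fin n) (Unitization ℂ A))
        (fun i => (va i).val) i * (vb i).val) = Fin.cons (u 0).val fun _ => 1 := by
      funext i
      refine Fin.cases ?_ (fun j => ?_) i
      · simp only [Fin.cons_zero, Matrix.one_mul, hvb, ht0]
      · simp only [Fin.cons_succ, hva, hvb]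
        exact Units.inv_mul _
    rw [htop, reindex_sub, fromBlocks_sub00, sub_self]
    have hbot : (1 : Matrix (Fin ((m + 1) * n)) (Fin ((m + 1) * n)) (Unitization ℂ A)) -
        cc n (m + 1) (fun i => Fin.snoc (fun i => ((va i)⁻¹).val) 1 i * ((vb i)⁻¹).val) =
        cc n (m + 1) (fun i =>
          1 - Fin.snoc (fun i => ((va i)⁻¹).val) 1 i * ((vb i)⁻¹).val) := by
      conv_lhs => rw [← cc_one n (m + 1)]
      rw [cc_sub]
    rw [hbot, norm_reindex]
    refine le_trans (norm_fromBlocks_le _ _) ?_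
    rw [norm_zero]
    rw [max_eq_right (norm_nonneg _)]
    refine cc_norm n (m + 1) _ hε.le fun i => ?_
    refine Fin.lastCases ?_ (fun j => ?_) i
    · rw [Fin.snoc_last, Matrix.one_mul]
      have : vb (Fin.last m) = 1 := by rw [hvb]; simp only [htlast]; exact hu1
      rw [this, inv_one, Units.val_one, sub_self, norm_zero]
      exact hε.le
    · rw [Fin.snoc_castSucc]
      have hinv : (va j)⁻¹ = u (t j.succ) := inv_inv _
      rw [hinv]
      set s : ℝ := t j.castSucc with hs
      set s' : ℝ := t j.succ with hs'
      have key : (1 : Matrix (Fin n) (Fin n) (Unitization ℂ A)) -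
          (u s').val * ((u s)⁻¹).val =
          ((u s).val - (u s').val) * ((u s)⁻¹).val := by
        rw [Matrix.sub_mul, Units.mul_inv]
      rw [key]
      have hdist : dist s s' < d := by
        rw [Real.dist_eq]
        have heq : s - s' = -(1 / (m : ℝ)) := by
          rw [hs, hs', ht]
          simp only [Fin.coe_castSucc, Fin.val_succ]
          push_cast
          field_simp
          ring
        rw [heq, abs_neg, abs_of_nonneg (by positivity)]
        exact hmd
      have hnd : ‖(u s).val - (u s').val‖ < ε / c := by
        have h := hdd s (htmem _) s' (htmem _) hdist
        rwa [dist_eq_norm] at h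
      calc ‖((u s).val - (u s').val) * ((u s)⁻¹).val‖
          ≤ ‖(u s).val - (u s').val‖ * ‖((u s)⁻¹).val‖ := norm_mul_le _ _
        _ ≤ (ε / c) * c := by
            refine mul_le_mul hnd.le (hbound s (htmem _)).2.2.2 (norm_nonneg _) ?_
            positivity
        _ = ε := div_mul_cancel₀ ε (ne_of_gt hc)


end
end

section
/- Let A be a C*-algebra and let C and D be closed two-sided ideals of A. Then for every δ > 0 and all c ∈ C, d ∈ D with ‖c − d‖ ≤ δ, there exists x ∈ C ∩ D with ‖x − c‖ < 2δ and ‖x − d‖ < 3δ. -/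
open scoped ContinuousMapZero
open Topology

section Helpers

variable {A : Type*} [NonUnitalCStarAlgebra A]

lemma quasi_nonneg_mul_star_self (a : A) : ∀ t ∈ quasispectrum ℝ (a * star a), 0 ≤ t := by
  intro t ht
  rw [Unitization.quasispectrum_eq_spectrum_inr' ℝ ℂ] at ht
  have h : ((a * star a : A) : Unitization ℂ A)
      = star ((star a : A) : Unitization ℂ A) * ((star a : A) : Unitization ℂ A) := by
    simp [Unitization.inr_mul, Unitization.inr_star]
  rw [h] at ht
  exact spectrum_star_mul_self_nonneg t ht

lemma key_approx (a : A) {ε : ℝ} (hε : 0 < ε) :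
    ‖cfcₙ (fun t : ℝ => t / (t + ε)) (a * star a) * a - a‖ ^ 2 ≤ ε / 4 ∧
      ‖cfcₙ (fun t : ℝ => t / (t + ε)) (a * star a)‖ ≤ 1 := by
  set b : A := a * star a with hb_def
  set f : ℝ → ℝ := fun t => t / (t + ε) with hf_def
  have hσ : ∀ t ∈ quasispectrum ℝ b, 0 ≤ t := quasi_nonneg_mul_star_self a
  have hb : IsSelfAdjoint b := .mul_star_self a
  have hden : ∀ t ∈ quasispectrum ℝ b, t + ε ≠ 0 := fun t ht => by
    have := hσ t ht; positivity
  have hfc : ContinuousOn f (quasispectrum ℝ b) := by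
    exact ContinuousOn.div continuousOn_id (continuousOn_id.add continuousOn_const) hden
  have hf0 : f 0 = 0 := by simp [hf_def]
  set h : A := cfcₙ f b with hh_def
  have hhsa : IsSelfAdjoint h := cfcₙ_predicate f b
  constructor
  · -- main estimate
    have hid : ContinuousOn (fun t : ℝ => t) (quasispectrum ℝ b) := continuousOn_id
    have hft : ContinuousOn (fun t : ℝ => f t * t) (quasispectrum ℝ b) := hfc.mul hid
    have htf : ContinuousOn (fun t : ℝ => t * f t) (quasispectrum ℝ b) := hid.mul hfc
    have t2 : h * b = cfcₙ (fun t : ℝ => f t * t) b := by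
      rw [cfcₙ_mul f _ b hfc hf0 hid rfl, cfcₙ_id' ℝ b]
    have t3 : b * h = cfcₙ (fun t : ℝ => t * f t) b := by
      rw [cfcₙ_mul _ f b hid rfl hfc hf0, cfcₙ_id' ℝ b]
    have t1 : h * b * h = cfcₙ (fun t : ℝ => f t * t * f t) b := by
      rw [cfcₙ_mul _ f b hft (by simp [hf0]) hfc hf0, ← t2]
    have expand : (h * a - a) * star (h * a - a) = h * b * h - h * b - b * h + b := by
      rw [star_sub, star_mul, hhsa.star_eq]
      simp only [hb_def]
      noncomm_ring
    have combine : h * b * h - h * b - b * h + b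
        = cfcₙ (fun t : ℝ => f t * t * f t - f t * t - t * f t + t) b := by
      rw [cfcₙ_add (fun t => f t * t * f t - f t * t - t * f t) (fun t => t) b (((hfc.mul hid).mul hfc).sub hft |>.sub htf) (by simp [hf0]) hid rfl,
        cfcₙ_sub (fun t => f t * t * f t - f t * t) (fun t => t * f t) b ((hfc.mul hid).mul hfc |>.sub hft) (by simp [hf0]) htf (by simp [hf0]),
        cfcₙ_sub (fun t => f t * t * f t) (fun t => f t * t) b ((hfc.mul hid).mul hfc) (by simp [hf0]) hft (by simp [hf0]),
        ← t1, ← t2, ← t3, cfcₙ_id' ℝ b]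
    have hnorm : ‖cfcₙ (fun t : ℝ => f t * t * f t - f t * t - t * f t + t) b‖ ≤ ε / 4 := by
      apply norm_cfcₙ_le
      intro t ht
      have ht0 := hσ t ht
      have htε : 0 < t + ε := by positivity
      have hval : f t * t * f t - f t * t - t * f t + t = t * (ε / (t + ε)) ^ 2 := by
        simp only [hf_def]
        field_simp
        ring
      rw [hval, Real.norm_eq_abs, abs_of_nonneg (by positivity)]
      have heq : t * (ε / (t + ε)) ^ 2 = (t * ε ^ 2) / ((t + ε) ^ 2) := by
        field_simp
      rw [heq, div_le_iff₀ (by positivity)]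
      nlinarith [sq_nonneg (t - ε)]
    calc ‖h * a - a‖ ^ 2 = ‖(h * a - a) * star (h * a - a)‖ := by
          rw [CStarRing.norm_self_mul_star, sq]
      _ ≤ ε / 4 := by rw [expand, combine]; exact hnorm
  · apply norm_cfcₙ_le
    intro t ht
    have ht0 := hσ t ht
    rw [Real.norm_eq_abs, abs_of_nonneg (by positivity), div_le_one (by positivity)]
    linarith


lemma aux_smul_mem (C : TwoSidedIdeal A) (hC : IsClosed (C : Set A)) {c : A}
    (hc : c ∈ C) (r : ℝ) : r • c ∈ C := by
  have : r • c ∈ closure (C : Set A) := by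
    rw [Metric.mem_closure_iff]
    intro ε' hε'
    set ε : ℝ := (ε' / (|r| + 1)) ^ 2 with hε_def
    have hε : 0 < ε := by positivity
    obtain ⟨h1, -⟩ := key_approx c hε
    set h : A := cfcₙ (fun t : ℝ => t / (t + ε)) (c * star c) with hh_def
    refine ⟨(r • h) * c, C.mul_mem_left _ _ hc, ?_⟩
    rw [dist_eq_norm, smul_mul_assoc, ← smul_sub, norm_smul, Real.norm_eq_abs]
    have hle : ‖c - h * c‖ ≤ ε' / (|r| + 1) := by
      rw [norm_sub_rev]
      nlinarith [norm_nonneg (h * c - c), Real.sq_sqrt hε.le, abs_nonneg r,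
        div_pos hε' (by positivity : (0:ℝ) < |r| + 1)]
    calc |r| * ‖c - h * c‖ ≤ |r| * (ε' / (|r| + 1)) :=
          mul_le_mul_of_nonneg_left hle (abs_nonneg r)
      _ < ε' := by
          rw [mul_div_assoc']
          rw [div_lt_iff₀ (by positivity)]
          nlinarith [abs_nonneg r]
  rwa [hC.closure_eq] at this

lemma aux_cfcnHom_mem (C : TwoSidedIdeal A) (hC : IsClosed (C : Set A))
    {a : A} (ha : IsSelfAdjoint a) (haC : a ∈ C) (F : C(quasispectrum ℝ a, ℝ)₀) :
    cfcₙHom (R := ℝ) ha F ∈ C := by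
  have h0 : ((0 : quasispectrum ℝ a) : ℝ) = 0 := rfl
  induction F using ContinuousMapZero.induction_on_of_compact with
  | zero => rw [map_zero]; exact C.zero_mem
  | id =>
      have hid : cfcₙHom (R := ℝ) ha (.id (quasispectrum ℝ a)) = a := cfcₙHom_id ha
      rwa [hid]
  | star_id =>
      have hid : cfcₙHom (R := ℝ) ha (.id (quasispectrum ℝ a)) = a := cfcₙHom_id ha
      rw [map_star, hid, ha.star_eq]; exact haC
  | add f g hf hg => rw [map_add]; exact C.add_mem hf hg
  | mul f g hf hg => rw [map_mul]; exact C.mul_mem_left _ _ hg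
  | smul r f hf => rw [map_smul]; exact aux_smul_mem C hC hf r
  | frequently f hf =>
      have hclosed : IsClosed (cfcₙHom (R := ℝ) ha ⁻¹' (C : Set A)) :=
        hC.preimage (cfcₙHom_isClosedEmbedding (R := ℝ) ha).continuous
      have : f ∈ closure (cfcₙHom (R := ℝ) ha ⁻¹' (C : Set A)) :=
        mem_closure_iff_frequently.mpr hf
      rwa [hclosed.closure_eq] at this

lemma aux_cfcn_mem (C : TwoSidedIdeal A) (hC : IsClosed (C : Set A))
    {a : A} (ha : IsSelfAdjoint a) (haC : a ∈ C) (f : ℝ → ℝ)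
    (hf : ContinuousOn f (quasispectrum ℝ a)) (hf0 : f 0 = 0) :
    cfcₙ f a ∈ C := by
  rw [cfcₙ_apply f a hf hf0 ha]
  exact aux_cfcnHom_mem C hC ha haC _

end Helpers

/-- A pair of closed two-sided ideals in a C*-algebra is uniform with decay function
`f(t) = 3t`: for every `δ > 0` and all `c ∈ C`, `d ∈ D` with `‖c − d‖ ≤ δ`, there is
`x ∈ C ∩ D` with `‖x − c‖ < 2δ` and `‖x − d‖ < 3δ`. -/
theorem stmt_16 (A : Type*) [NonUnitalNormedRing A] [StarRing A] [CStarRing A]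
    [NormedSpace ℂ A] [IsScalarTower ℂ A A] [SMulCommClass ℂ A A]
    [CompleteSpace A] [StarModule ℂ A]
    (C D : TwoSidedIdeal A) (hC : IsClosed (C : Set A)) (hD : IsClosed (D : Set A))
    (δ : ℝ) (hδ : 0 < δ) (c d : A) (hc : c ∈ C) (hd : d ∈ D) (hcd : ‖c - d‖ ≤ δ) :
    ∃ x : A, x ∈ C ∧ x ∈ D ∧ ‖x - c‖ < 2 * δ ∧ ‖x - d‖ < 3 * δ := by
  letI : NonUnitalCStarAlgebra A := {}
  set b : A := c * star c with hb_def
  have hbC : b ∈ C := C.mul_mem_right c (star c) hc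
  have hbsa : IsSelfAdjoint b := .mul_star_self c
  have hε : (0 : ℝ) < δ ^ 2 := by positivity
  obtain ⟨h1, h2⟩ := key_approx c hε
  set h : A := cfcₙ (fun t : ℝ => t / (t + δ ^ 2)) b with hh_def
  have hσ : ∀ t ∈ quasispectrum ℝ b, 0 ≤ t := quasi_nonneg_mul_star_self c
  have hfc : ContinuousOn (fun t : ℝ => t / (t + δ ^ 2)) (quasispectrum ℝ b) := by
    refine ContinuousOn.div continuousOn_id (continuousOn_id.add continuousOn_const) ?_
    intro t ht
    have := hσ t ht
    positivity
  have hhC : h ∈ C := aux_cfcn_mem C hC hbsa hbC _ hfc (by simp)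
  have hhc : ‖h * c - c‖ ≤ δ / 2 := by nlinarith [norm_nonneg (h * c - c)]
  have hxc : ‖h * d - c‖ < 2 * δ := by
    have hsplit : h * d - c = h * (d - c) + (h * c - c) := by noncomm_ring
    have hb1 : ‖h * (d - c)‖ ≤ δ := by
      calc ‖h * (d - c)‖ ≤ ‖h‖ * ‖d - c‖ := norm_mul_le _ _
        _ ≤ 1 * δ := by
            apply mul_le_mul h2 (by rwa [norm_sub_rev]) (norm_nonneg _) zero_le_one
        _ = δ := one_mul δ
    calc ‖h * d - c‖ ≤ ‖h * (d - c)‖ + ‖h * c - c‖ := hsplit ▸ norm_add_le _ _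
      _ ≤ δ + δ / 2 := add_le_add hb1 hhc
      _ < 2 * δ := by linarith
  refine ⟨h * d, C.mul_mem_right h d hhC, D.mul_mem_left h d hd, hxc, ?_⟩
  have hsplit : h * d - d = (h * d - c) + (c - d) := by abel
  calc ‖h * d - d‖ ≤ ‖h * d - c‖ + ‖c - d‖ := hsplit ▸ norm_add_le _ _
    _ < 2 * δ + δ := by have := hcd; linarith
    _ = 3 * δ := by ring
end

section
/- There exist orthogonal projections p and q on the Hilbert space ℓ²(ℕ) whose ranges intersect trivially (range(p) ∩ range(q) = {0}), together with sequences (xₙ) and (yₙ) of unit vectors with xₙ ∈ range(p) and yₙ ∈ range(q) for all n and ‖xₙ − yₙ‖ → 0 as n → ∞. Consequently, the hereditary C*-subalgebras C := p𝒦p and D := q𝒦q of the algebra 𝒦 of compact operators on ℓ²(ℕ) satisfy C ∩ D = {0}, while the rank-one orthogonal projections pₙ onto the span of xₙ and qₙ onto the span of yₙ satisfy pₙ ∈ C, qₙ ∈ D, and ‖pₙ − qₙ‖ → 0 as n → ∞. -/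
open Filter Topology

local notation "H" => lp (fun _ : ℕ => ℂ) 2
local notation "⟪" x ", " y "⟫" => @inner ℂ _ _ x y

noncomputable def ee (i : ℕ) : H := lp.single 2 i 1

lemma ee_apply (i j : ℕ) : (ee j : ∀ _ : ℕ, ℂ) i = if i = j then 1 else 0 := by
  by_cases h : i = j
  · subst h; simp [ee, lp.single_apply_self]
  · simp [ee, lp.single_apply_ne _ _ _ h, h]

lemma inner_ee (i j : ℕ) : ⟪ee i, ee j⟫ = if i = j then 1 else 0 := by
  rw [ee, lp.inner_single_left, ee_apply]
  simp

lemma norm_ee (i : ℕ) : ‖ee i‖ = 1 := by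
  have := lp.norm_single (p := 2) (E := fun _ : ℕ => ℂ) (by norm_num) i (1:ℂ)
  simpa [ee] using this

-- rank one compact
lemma rankOne_compact (x y : H) : IsCompactOperator ((innerSL ℂ x).smulRight y) := by
  refine ⟨(fun c : ℂ => c • y) '' Metric.closedBall 0 ‖x‖, ?_, ?_⟩
  · exact (isCompact_closedBall 0 ‖x‖).image (continuous_id.smul continuous_const)
  · refine Filter.mem_of_superset (Metric.closedBall_mem_nhds 0 one_pos) ?_
    intro f hf
    refine ⟨⟪x, f⟫, ?_, rfl⟩
    rw [Metric.mem_closedBall, dist_zero_right]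
    calc ‖⟪x, f⟫‖ ≤ ‖x‖ * ‖f‖ := norm_inner_le_norm x f
    _ ≤ ‖x‖ * 1 := by
        have := Metric.mem_closedBall.mp hf
        rw [dist_zero_right] at this
        exact mul_le_mul_of_nonneg_left this (norm_nonneg x)
    _ = ‖x‖ := mul_one _

lemma mem_span_orthogonal_iff {S : Set H} {v : H} :
    v ∈ (Submodule.span ℂ S)ᗮ ↔ ∀ u ∈ S, ⟪u, v⟫ = 0 := by
  constructor
  · intro hv u hu
    exact hv u (Submodule.subset_span hu)
  · intro h u hu
    induction hu using Submodule.span_induction with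
    | mem u hu => exact h u hu
    | zero => simp
    | add a b _ _ ha hb => rw [inner_add_left, ha, hb, add_zero]
    | smul c a _ ha => rw [inner_smul_left, ha, mul_zero]

-- norm bound for difference of rank-one projections
lemma rankOne_diff_norm (x y : H) (hx : ‖x‖ = 1) (hy : ‖y‖ = 1) :
    ‖(innerSL ℂ x).smulRight x - (innerSL ℂ y).smulRight y‖ ≤ 2 * ‖x - y‖ := by
  refine ContinuousLinearMap.opNorm_le_bound _ (by positivity) fun v => ?_
  have key : ((innerSL ℂ x).smulRight x - (innerSL ℂ y).smulRight y) v
      = ⟪x, v⟫ • (x - y) + ⟪x - y, v⟫ • y := by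
    simp only [ContinuousLinearMap.sub_apply, ContinuousLinearMap.smulRight_apply,
      innerSL_apply_apply, smul_sub, inner_sub_left, sub_smul]
    abel
  rw [key]
  calc ‖⟪x, v⟫ • (x - y) + ⟪x - y, v⟫ • y‖
      ≤ ‖⟪x, v⟫ • (x - y)‖ + ‖⟪x - y, v⟫ • y‖ := norm_add_le _ _
    _ = ‖⟪x, v⟫‖ * ‖x - y‖ + ‖⟪x - y, v⟫‖ * ‖y‖ := by rw [norm_smul, norm_smul]
    _ ≤ (‖x‖ * ‖v‖) * ‖x - y‖ + (‖x - y‖ * ‖v‖) * ‖y‖ := by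
        gcongr <;> exact norm_inner_le_norm _ _
    _ = 2 * ‖x - y‖ * ‖v‖ := by rw [hx, hy]; ring

section proj
variable (U : Submodule ℂ H) [CompleteSpace U]

noncomputable def projCLM : H →L[ℂ] H := U.subtypeL ∘L U.orthogonalProjectionOnto

lemma projCLM_apply (v : H) : projCLM U v = (U.orthogonalProjectionOnto v : H) := rfl

lemma projCLM_eq_self {u : H} (hu : u ∈ U) : projCLM U u = u := by
  rw [projCLM_apply]
  exact Submodule.starProjection_eq_self_iff.mpr hu

lemma projCLM_mem (v : H) : projCLM U v ∈ U := (U.orthogonalProjectionOnto v).2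

lemma range_projCLM : Set.range (projCLM U) = ↑U := by
  ext v
  constructor
  · rintro ⟨w, rfl⟩; exact projCLM_mem U w
  · intro hv; exact ⟨v, projCLM_eq_self U hv⟩

lemma projCLM_sa : IsSelfAdjoint (projCLM U) := isSelfAdjoint_starProjection U

lemma projCLM_idem : projCLM U * projCLM U = projCLM U := by
  refine ContinuousLinearMap.ext fun v => ?_
  rw [ContinuousLinearMap.mul_apply]
  exact projCLM_eq_self U (projCLM_mem U v)

lemma projCLM_inner_left (x v : H) (hx : x ∈ U) : ⟪x, projCLM U v⟫ = ⟪x, v⟫ := by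
  have h := (projCLM_sa U).adjoint_eq
  calc ⟪x, projCLM U v⟫ = ⟪ContinuousLinearMap.adjoint (projCLM U) x, v⟫ := by
        rw [ContinuousLinearMap.adjoint_inner_left]
    _ = ⟪projCLM U x, v⟫ := by rw [h]
    _ = ⟪x, v⟫ := by rw [projCLM_eq_self U hx]

lemma projCLM_sandwich (x : H) (hx : x ∈ U) :
    projCLM U * (innerSL ℂ x).smulRight x * projCLM U = (innerSL ℂ x).smulRight x := by
  refine ContinuousLinearMap.ext fun v => ?_
  rw [ContinuousLinearMap.mul_apply, ContinuousLinearMap.mul_apply]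
  show projCLM U (((innerSL ℂ x).smulRight x) (projCLM U v)) = ((innerSL ℂ x).smulRight x) v
  rw [ContinuousLinearMap.smulRight_apply, innerSL_apply_apply]
  rw [ContinuousLinearMap.smulRight_apply, innerSL_apply_apply, map_smul,
    projCLM_eq_self U hx, projCLM_inner_left U x v hx]

end proj

lemma inner_ee_left (i : ℕ) (f : H) : ⟪ee i, f⟫ = f i := by
  rw [ee, lp.inner_single_left]; simp

noncomputable def cc (n : ℕ) : ℝ := Real.cos ((n + 1 : ℝ)⁻¹)
noncomputable def ss (n : ℕ) : ℝ := Real.sin ((n + 1 : ℝ)⁻¹)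

lemma ss_pos (n : ℕ) : 0 < ss n := by
  apply Real.sin_pos_of_pos_of_lt_pi
  · positivity
  · have h1 : (n + 1 : ℝ)⁻¹ ≤ 1 := by
      rw [inv_le_one_iff₀]; right; linarith [Nat.cast_nonneg (α := ℝ) n]
    linarith [Real.pi_gt_three]

lemma cc_sq_add_ss_sq (n : ℕ) : cc n ^ 2 + ss n ^ 2 = 1 := by
  rw [cc, ss, add_comm]; exact Real.sin_sq_add_cos_sq _

noncomputable def xx (n : ℕ) : H := ee (2 * n)
noncomputable def yy (n : ℕ) : H := (cc n : ℂ) • ee (2 * n) + (ss n : ℂ) • ee (2 * n + 1)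
noncomputable def ww (n : ℕ) : H := (ss n : ℂ) • ee (2 * n) - (cc n : ℂ) • ee (2 * n + 1)

lemma norm_yy (n : ℕ) : ‖yy n‖ = 1 := by
  have h : ⟪yy n, yy n⟫ = 1 := by
    simp only [yy, inner_add_left, inner_add_right, inner_smul_left, inner_smul_right,
      inner_ee, Complex.conj_ofReal]
    have h2 : (2 * n : ℕ) ≠ 2 * n + 1 := by omega
    simp only [if_true, if_neg h2, if_neg (Ne.symm h2)]
    have h1 : (cc n : ℂ) ^ 2 + (ss n : ℂ) ^ 2 = 1 := by exact_mod_cast cc_sq_add_ss_sq n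
    linear_combination h1
  have h3 : ‖yy n‖ ^ 2 = 1 := by
    rw [← inner_self_eq_norm_sq (𝕜 := ℂ), h]; simp
  nlinarith [norm_nonneg (yy n)]

noncomputable def KK : Submodule ℂ H :=
  (Submodule.span ℂ (Set.range fun n => ee (2 * n + 1)))ᗮ
noncomputable def LL : Submodule ℂ H := (Submodule.span ℂ (Set.range ww))ᗮ

lemma xx_mem_KK (n : ℕ) : xx n ∈ KK := by
  rw [KK, mem_span_orthogonal_iff]
  rintro u ⟨m, rfl⟩
  rw [xx, inner_ee, if_neg (by omega)]

lemma yy_mem_LL (n : ℕ) : yy n ∈ LL := by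
  rw [LL, mem_span_orthogonal_iff]
  rintro u ⟨m, rfl⟩
  simp only [ww, yy, inner_sub_left, inner_add_right, inner_smul_left, inner_smul_right,
    inner_ee, Complex.conj_ofReal]
  by_cases h : m = n
  · subst h
    rw [if_pos rfl, if_pos rfl, if_neg (by omega), if_neg (by omega)]
    ring
  · rw [if_neg (by omega), if_neg (by omega), if_neg (by omega), if_neg (by omega)]
    ring

lemma KK_inter_LL {f : H} (hK : f ∈ KK) (hL : f ∈ LL) : f = 0 := by
  have hodd : ∀ m : ℕ, f (2 * m + 1) = 0 := by
    intro m
    have := hK (ee (2 * m + 1)) (Submodule.subset_span ⟨m, rfl⟩)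
    rwa [inner_ee_left] at this
  have heven : ∀ m : ℕ, f (2 * m) = 0 := by
    intro m
    have := hL (ww m) (Submodule.subset_span ⟨m, rfl⟩)
    rw [ww, inner_sub_left, inner_smul_left, inner_smul_left, inner_ee_left, inner_ee_left,
      Complex.conj_ofReal, Complex.conj_ofReal, hodd m, mul_zero, sub_zero] at this
    have hs : (ss m : ℂ) ≠ 0 := by
      exact_mod_cast (ss_pos m).ne'
    exact (mul_eq_zero.mp this).resolve_left hs
  ext i
  rcases Nat.even_or_odd i with ⟨m, hm⟩ | ⟨m, hm⟩
  · subst hm; have := heven m; rw [two_mul] at this; simpa using this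
  · subst hm; simpa using hodd m

lemma norm_xx (n : ℕ) : ‖xx n‖ = 1 := norm_ee _

lemma xx_sub_yy (n : ℕ) : xx n - yy n
    = ((1 : ℂ) - (cc n : ℂ)) • ee (2 * n) - (ss n : ℂ) • ee (2 * n + 1) := by
  rw [xx, yy]; module

lemma norm_xx_sub_yy_le (n : ℕ) : ‖xx n - yy n‖ ≤ |1 - cc n| + |ss n| := by
  rw [xx_sub_yy]
  calc ‖((1 : ℂ) - (cc n : ℂ)) • ee (2 * n) - (ss n : ℂ) • ee (2 * n + 1)‖
      ≤ ‖((1 : ℂ) - (cc n : ℂ)) • ee (2 * n)‖ + ‖(ss n : ℂ) • ee (2 * n + 1)‖ :=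
        norm_sub_le _ _
    _ = |1 - cc n| + |ss n| := by
        rw [norm_smul, norm_smul, norm_ee, norm_ee, mul_one, mul_one]
        have : ((1 : ℂ) - (cc n : ℂ)) = ((1 - cc n : ℝ) : ℂ) := by push_cast; ring
        rw [this, Complex.norm_real, Complex.norm_real, Real.norm_eq_abs, Real.norm_eq_abs]

lemma tendsto_norm_xx_sub_yy : Tendsto (fun n => ‖xx n - yy n‖) atTop (𝓝 0) := by
  have h0 : Tendsto (fun n : ℕ => ((n : ℝ) + 1)⁻¹) atTop (𝓝 0) := by
    simpa [one_div] using tendsto_one_div_add_atTop_nhds_zero_nat (𝕜 := ℝ)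
  have hc : Tendsto cc atTop (𝓝 1) := by
    have := (Real.continuous_cos.tendsto 0).comp h0
    show Tendsto (fun n : ℕ => Real.cos ((n + 1 : ℝ)⁻¹)) atTop (𝓝 1)
    simpa [cc, Function.comp_def] using this
  have hs : Tendsto ss atTop (𝓝 0) := by
    have := (Real.continuous_sin.tendsto 0).comp h0
    show Tendsto (fun n : ℕ => Real.sin ((n + 1 : ℝ)⁻¹)) atTop (𝓝 0)
    simpa [ss, Function.comp_def] using this
  have hb : Tendsto (fun n => |1 - cc n| + |ss n|) atTop (𝓝 0) := by
    have := ((tendsto_const_nhds (x := (1:ℝ)).sub hc).abs.add hs.abs)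
    simpa using this
  exact squeeze_zero (fun n => norm_nonneg _) norm_xx_sub_yy_le hb

noncomputable instance : CompleteSpace KK := by unfold KK; infer_instance
noncomputable instance : CompleteSpace LL := by unfold LL; infer_instance

/-- Example 5.2': there are orthogonal projections `p`, `q` on `ℓ²(ℕ)` with trivially
intersecting ranges, together with unit vectors `xₙ ∈ range p`, `yₙ ∈ range q` with
`‖xₙ − yₙ‖ → 0`; consequently the hereditary subalgebras `C = p𝒦p` and `D = q𝒦q` of the
compact operators satisfy `C ∩ D = {0}`, while the rank-one projections `pₙ` onto `span xₙ`
and `qₙ` onto `span yₙ` satisfy `pₙ ∈ C`, `qₙ ∈ D` and `‖pₙ − qₙ‖ → 0`. -/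
theorem stmt_17 :
    ∃ p q : H →L[ℂ] H,
      IsSelfAdjoint p ∧ p * p = p ∧ IsSelfAdjoint q ∧ q * q = q ∧
      Set.range p ∩ Set.range q = {0} ∧
      ∃ x y : ℕ → H,
        (∀ n, ‖x n‖ = 1) ∧ (∀ n, ‖y n‖ = 1) ∧
        (∀ n, x n ∈ Set.range p) ∧ (∀ n, y n ∈ Set.range q) ∧
        Tendsto (fun n => ‖x n - y n‖) atTop (𝓝 0) ∧
        ({T : H →L[ℂ] H | ∃ k : H →L[ℂ] H, IsCompactOperator k ∧ T = p * k * p} ∩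
            {T : H →L[ℂ] H | ∃ k : H →L[ℂ] H, IsCompactOperator k ∧ T = q * k * q} =
          {0}) ∧
        (∀ n, ∃ k : H →L[ℂ] H, IsCompactOperator k ∧
          (innerSL ℂ (x n)).smulRight (x n) = p * k * p) ∧
        (∀ n, ∃ k : H →L[ℂ] H, IsCompactOperator k ∧
          (innerSL ℂ (y n)).smulRight (y n) = q * k * q) ∧
        Tendsto
          (fun n => ‖(innerSL ℂ (x n)).smulRight (x n) - (innerSL ℂ (y n)).smulRight (y n)‖)
          atTop (𝓝 0) := by
  refine ⟨projCLM KK, projCLM LL, projCLM_sa _, projCLM_idem _, projCLM_sa _, projCLM_idem _,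
    ?_, xx, yy, norm_xx, norm_yy, ?_, ?_, tendsto_norm_xx_sub_yy, ?_, ?_, ?_, ?_⟩
  · rw [range_projCLM, range_projCLM]
    ext f
    simp only [Set.mem_inter_iff, SetLike.mem_coe, Set.mem_singleton_iff]
    exact ⟨fun ⟨h1, h2⟩ => KK_inter_LL h1 h2, fun h => h ▸ ⟨zero_mem _, zero_mem _⟩⟩
  · intro n; rw [range_projCLM]; exact xx_mem_KK n
  · intro n; rw [range_projCLM]; exact yy_mem_LL n
  · ext T
    simp only [Set.mem_inter_iff, Set.mem_setOf_eq, Set.mem_singleton_iff]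
    constructor
    · rintro ⟨⟨k, hk, rfl⟩, ⟨k', hk', hT⟩⟩
      refine ContinuousLinearMap.ext fun v => ?_
      have h1 : (projCLM KK * k * projCLM KK) v ∈ KK := by
        rw [ContinuousLinearMap.mul_apply, ContinuousLinearMap.mul_apply]
        exact projCLM_mem _ _
      have h2 : (projCLM KK * k * projCLM KK) v ∈ LL := by
        rw [hT, ContinuousLinearMap.mul_apply, ContinuousLinearMap.mul_apply]
        exact projCLM_mem _ _
      rw [KK_inter_LL h1 h2]; rfl
    · rintro rfl
      have h0 : IsCompactOperator ⇑(0 : H →L[ℂ] H) := by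
        have : ⇑(0 : H →L[ℂ] H) = (0 : H → H) := rfl
        rw [this]; exact isCompactOperator_zero
      exact ⟨⟨0, h0, by simp⟩, ⟨0, h0, by simp⟩⟩
  · exact fun n => ⟨(innerSL ℂ (xx n)).smulRight (xx n), rankOne_compact _ _,
      (projCLM_sandwich KK (xx n) (xx_mem_KK n)).symm⟩
  · exact fun n => ⟨(innerSL ℂ (yy n)).smulRight (yy n), rankOne_compact _ _,
      (projCLM_sandwich LL (yy n) (yy_mem_LL n)).symm⟩
  · refine squeeze_zero (fun n => norm_nonneg _)
      (fun n => rankOne_diff_norm (xx n) (yy n) (norm_xx n) (norm_yy n)) ?_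
    simpa using tendsto_norm_xx_sub_yy.const_mul 2
end
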